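/- arXiv:1810.04738 — 5 statements merged into one kernel-verified Lean document; each statement's English description precedes it below -/
import Mathlib

section
/- Let Z be a non-empty finite set, let P be a strictly positive pmf on Z, and let φ ∈ ℝ^{|Z|} satisfy φᵀ√P = 0. For ε ∈ ℝ define Q_ε(z) = P(z) + ε√(P(z)) φ(z). Then, as ε → 0, D(Q_ε || P) − (1/2)ε²‖φ‖₂² = o(ε²); that is, the function ε ↦ Σ_z Q_ε(z) log(Q_ε(z)/P(z)) − (1/2)ε²‖φ‖₂² is little-o of ε² as ε → 0. (Note that Q_ε is a valid pmf with strictly positive entries for all sufficiently small ε.) -/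
/-!
Write `Q_ε(z) = P(z) (1 + u_z)` with `u_z = ε φ(z) / √P(z)`. Then each summand of `D(Q_ε ‖ P)` is
`P(z) (1 + u_z) log (1 + u_z)`, and `(1 + u) log (1 + u) = u + u² / 2 + o(u²)`. The linear terms
`P(z) u_z = ε √P(z) φ(z)` sum to zero because `φ ⊥ √P`, while the quadratic terms
`P(z) u_z² / 2 = ε² φ(z)² / 2` sum to `ε² ‖φ‖² / 2`. The expansion of `(1 + u) log (1 + u)` comes from
lifting `(1 + u)⁻¹ - 1 = o(1)` twice through the mean value inequality: a function vanishing at `0`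
whose derivative is `o(xⁿ)` is itself `o(xⁿ⁺¹)`.
-/

open Filter Asymptotics

open Real Topology

theorem isLittleO_pow_succ_of_hasDerivAt {E : Type*} [NormedAddCommGroup E] [NormedSpace ℝ E]
    {f f' : ℝ → E} {x₀ : ℝ} {n : ℕ} {s : Set ℝ}
    (hs : Convex ℝ s) (hs_nhds : s ∈ 𝓝 x₀) (hff' : ∀ x ∈ s, HasDerivAt f (f' x) x)
    (hf' : f' =o[𝓝 x₀] fun x ↦ (x - x₀) ^ n) :
    (fun x ↦ f x - f x₀) =o[𝓝 x₀] fun x ↦ (x - x₀) ^ (n + 1) := by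
  rw [← nhdsWithin_eq_nhds.2 hs_nhds] at hf' ⊢
  exact hs.isLittleO_pow_succ_real (mem_of_mem_nhds hs_nhds)
    (fun x hx ↦ (hff' x hx).hasDerivWithinAt) hf'

theorem isLittleO_comp_mul_const {E : Type*} [Norm E] {f : ℝ → E} {n : ℕ}
    (hf : f =o[𝓝 0] fun u ↦ u ^ n) (c : ℝ) :
    (fun ε ↦ f (ε * c)) =o[𝓝 0] fun ε ↦ ε ^ n := by
  have hc : Tendsto (fun ε : ℝ ↦ ε * c) (𝓝 0) (𝓝 0) := by
    simpa using (continuous_mul_const c).tendsto 0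
  refine (hf.comp_tendsto hc).trans_isBigO
    (((isBigO_refl (fun ε : ℝ ↦ ε ^ n) _).const_mul_left (c ^ n)).congr_left fun ε ↦ ?_)
  simp only [Function.comp_apply]
  ring

theorem log_one_add_sub_self_isLittleO :
    (fun u : ℝ ↦ log (1 + u) - u) =o[𝓝 0] fun u ↦ u := by
  have hderiv : ∀ u ∈ Set.Ioi (-1 : ℝ), HasDerivAt (fun u ↦ log (1 + u) - u) ((1 + u)⁻¹ - 1) u :=
    fun u hu ↦ by
      have hu : 1 + u ≠ 0 := by rw [Set.mem_Ioi] at hu; linarith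
      exact (((hasDerivAt_id' u).const_add 1).log hu).fun_sub (hasDerivAt_id' u)
        |>.congr_deriv (by simp)
  have hsmall : (fun u : ℝ ↦ (1 + u)⁻¹ - 1) =o[𝓝 0] fun u ↦ (u - 0) ^ 0 := by
    simp only [pow_zero, isLittleO_one_iff]
    have : ContinuousAt (fun u : ℝ ↦ (1 + u)⁻¹ - 1) 0 := by fun_prop (disch := norm_num)
    simpa using this.tendsto
  simpa using isLittleO_pow_succ_of_hasDerivAt (convex_Ioi _) (Ioi_mem_nhds (by norm_num))
    hderiv hsmall

theorem one_add_mul_log_one_add_sub_isLittleO :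
    (fun u : ℝ ↦ (1 + u) * log (1 + u) - u - u ^ 2 / 2) =o[𝓝 0] fun u ↦ u ^ 2 := by
  have hderiv : ∀ u ∈ Set.Ioi (-1 : ℝ),
      HasDerivAt (fun u ↦ (1 + u) * log (1 + u) - u - u ^ 2 / 2) (log (1 + u) - u) u :=
    fun u hu ↦ by
      have hu : 1 + u ≠ 0 := by rw [Set.mem_Ioi] at hu; linarith
      have hlog := ((hasDerivAt_id' u).const_add 1).log hu
      have h := ((((hasDerivAt_id' u).const_add 1).fun_mul hlog).fun_sub (hasDerivAt_id' u)).fun_sub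
        ((hasDerivAt_pow 2 u).div_const 2)
      refine h.congr_deriv ?_
      field_simp
      ring
  simpa using isLittleO_pow_succ_of_hasDerivAt (x₀ := 0) (n := 1) (convex_Ioi _)
    (Ioi_mem_nhds (by norm_num)) hderiv (by simpa using log_one_add_sub_self_isLittleO)

theorem mul_one_add_mul_log_one_add_eq {p : ℝ} (hp : 0 < p) (ε x : ℝ) :
    p * ((1 + ε * (x / √p)) * log (1 + ε * (x / √p)) - ε * (x / √p) - (ε * (x / √p)) ^ 2 / 2) =
      (p + ε * √p * x) * log ((p + ε * √p * x) / p) - ε * (√p * x) - 1 / 2 * ε ^ 2 * x ^ 2 := by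
  have hs : 0 < √p := sqrt_pos.2 hp
  have hsq : √p ^ 2 = p := sq_sqrt hp.le
  generalize √p = s at hs hsq ⊢
  subst hsq
  have h1 : 1 + ε * (x / s) = (s ^ 2 + ε * s * x) / s ^ 2 := by
    field_simp
  rw [h1]
  field_simp

theorem kl_local_approximation_general {Z : Type*} [Fintype Z]
    (P : Z → ℝ) (hP_pos : ∀ z, 0 < P z)
    (φ : Z → ℝ) (hφ : ∑ z, φ z * Real.sqrt (P z) = 0) :
    (fun ε : ℝ =>
        (∑ z, (P z + ε * Real.sqrt (P z) * φ z) *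
            Real.log ((P z + ε * Real.sqrt (P z) * φ z) / P z)) -
          (1 / 2) * ε ^ 2 * ∑ z, (φ z) ^ 2)
      =o[nhds (0 : ℝ)] fun ε => ε ^ 2 := by
  set g : ℝ → ℝ := fun u ↦ (1 + u) * log (1 + u) - u - u ^ 2 / 2
  have hterm : ∀ z, (fun ε ↦ P z * g (ε * (φ z / √(P z)))) =o[𝓝 0] fun ε ↦ ε ^ 2 := fun z ↦
    (isLittleO_comp_mul_const one_add_mul_log_one_add_sub_isLittleO _).const_mul_left _
  refine (IsLittleO.sum fun z (_ : z ∈ Finset.univ) ↦ hterm z).congr_left fun ε ↦ ?_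
  have hlinear : ∑ z, ε * (√(P z) * φ z) = 0 := by
    simp only [← Finset.mul_sum, mul_comm (√_), hφ, mul_zero]
  simp only [Finset.sum_apply, g, mul_one_add_mul_log_one_add_eq (hP_pos _),
    Finset.sum_sub_distrib, hlinear, sub_zero, Finset.mul_sum]

/-- **Local approximation of KL divergence.** For a strictly positive pmf `P` on a
finite set and a spherical perturbation `φ` with `φᵀ √P = 0`, the KL divergence
`D(Q_ε ‖ P)` of the perturbed pmf `Q_ε = P + ε √P φ` satisfies
`D(Q_ε ‖ P) = (1/2) ε² ‖φ‖₂² + o(ε²)` as `ε → 0`. -/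
theorem kl_local_approximation {Z : Type*} [Fintype Z] [Nonempty Z]
    (P : Z → ℝ) (hP_pos : ∀ z, 0 < P z) (hP_sum : ∑ z, P z = 1)
    (φ : Z → ℝ) (hφ : ∑ z, φ z * Real.sqrt (P z) = 0) :
    (fun ε : ℝ =>
        (∑ z, (P z + ε * Real.sqrt (P z) * φ z) *
            Real.log ((P z + ε * Real.sqrt (P z) * φ z) / P z)) -
          (1 / 2) * ε ^ 2 * ∑ z, (φ z) ^ 2)
      =o[nhds (0 : ℝ)] fun ε => ε ^ 2 :=
  kl_local_approximation_general P hP_pos φ hφ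
end

section
/- Let X and Z be non-empty finite sets, let P_X be a strictly positive pmf on X, let P_Z be a strictly positive pmf on Z, and let {ψ_x ∈ ℝ^{|Z|} : x ∈ X} satisfy ψ_xᵀ√P_Z = 0 for every x. For ε ∈ ℝ define the conditional pmfs P^ε_{Z|X=x} = P_Z + ε√P_Z ψ_x (entry-wise product), the joint pmf P^ε_{Z,X}(z,x) = P^ε_{Z|X=x}(z) P_X(x), the mutual information I_ε(X;Z) = Σ_{x,z} P^ε_{Z,X}(z,x) log( P^ε_{Z,X}(z,x) / (P_Z(z) P_X(x)) ), and the DTM B_ε = [P_Z]^{-1/2} P^ε_{Z,X} [P_X]^{-1/2}. Then, as ε → 0, I_ε(X;Z) − (1/2)(‖B_ε‖_F² − 1) = o(ε²). (Note that P^ε_{Z|X=x} are valid strictly positive pmfs for all sufficiently small ε, and the Z-marginal of P^ε_{Z,X} is P_Z.) -/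
open Filter Asymptotics Topology Finset

/-! Expanding `(p + εa) log ((p + εa) / p) = εa + ε²a²/(2p) + O(ε³)` termwise, the first-order
terms of `I_ε` cancel because every `ψ_x` is orthogonal to `√P_Z`, while the second-order terms sum
to `(ε²/2) Σ_x P_X(x) ‖ψ_x‖²`, which is exactly `(‖B_ε‖_F² - 1) / 2`. -/

lemma Real.log_one_add_sub_taylor_isBigO :
    (fun u : ℝ => Real.log (1 + u) - u + u ^ 2 / 2) =O[𝓝 0] fun u => u ^ 3 := by
  refine IsBigO.of_bound 2 ?_
  filter_upwards [eventually_abs_sub_lt (0 : ℝ) (by norm_num : (0 : ℝ) < 1 / 2)] with u hu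
  rw [sub_zero] at hu
  have h := Real.abs_log_sub_add_sum_range_le (x := -u) (by rw [abs_neg]; linarith) 2
  simp only [Finset.sum_range_succ, Finset.sum_range_zero, abs_neg, sub_neg_eq_add] at h
  push_cast at h
  have hbound : |u| ^ 3 / (1 - |u|) ≤ 2 * |u| ^ 3 := by
    rw [div_le_iff₀ (by linarith)]
    nlinarith [pow_nonneg (abs_nonneg u) 3]
  rw [Real.norm_eq_abs, Real.norm_eq_abs, abs_pow]
  calc |Real.log (1 + u) - u + u ^ 2 / 2|
      = |0 + (-u) ^ (0 + 1) / (0 + 1) + (-u) ^ (1 + 1) / (1 + 1) + Real.log (1 + u)| := by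
        ring_nf
    _ ≤ 2 * |u| ^ 3 := h.trans hbound

lemma Real.one_add_mul_log_one_add_sub_taylor_isBigO :
    (fun u : ℝ => (1 + u) * Real.log (1 + u) - u - u ^ 2 / 2) =O[𝓝 0] fun u => u ^ 3 := by
  have hbounded : (fun u : ℝ => 1 + u) =O[𝓝 0] fun _ => (1 : ℝ) :=
    isBigO_const_of_tendsto (y := 1 + 0) (tendsto_const_nhds.add tendsto_id) one_ne_zero
  have hprod := (hbounded.mul Real.log_one_add_sub_taylor_isBigO).congr_right fun u => one_mul _
  -- `(1 + u)(log (1 + u) - u + u²/2)` overshoots the target by exactly `u³/2`.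
  exact (hprod.sub ((isBigO_refl _ _).const_mul_left (1 / 2))).congr_left fun u => by ring

lemma Real.add_mul_log_div_sub_taylor_isBigO {p : ℝ} (hp : p ≠ 0) (a : ℝ) :
    (fun ε : ℝ => (p + ε * a) * Real.log ((p + ε * a) / p) - (ε * a + ε ^ 2 * a ^ 2 / (2 * p)))
      =O[𝓝 0] fun ε => ε ^ 3 := by
  have hlim : Tendsto (fun ε : ℝ => ε * (a / p)) (𝓝 0) (𝓝 0) := by
    simpa using (tendsto_id (x := 𝓝 (0 : ℝ))).mul_const (a / p)
  have hcube : (fun ε : ℝ => (ε * (a / p)) ^ 3) =O[𝓝 0] fun ε => ε ^ 3 :=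
    (isBigO_const_mul_self ((a / p) ^ 3) _ _).congr_left fun ε => by ring
  refine (((Real.one_add_mul_log_one_add_sub_taylor_isBigO.comp_tendsto hlim).trans hcube
    ).const_mul_left p).congr_left fun ε => ?_
  have hratio : (p + ε * a) / p = 1 + ε * (a / p) := by field_simp
  simp only [Function.comp_apply, hratio]
  field_simp
  ring

section
variable {X Z : Type*} [Fintype X] [Fintype Z]

lemma sum_sq_sqrt_add_mul {PZ : Z → ℝ} (hPZ_nonneg : ∀ z, 0 ≤ PZ z) (hPZ_sum : ∑ z, PZ z = 1)
    {φ : Z → ℝ} (hφ : ∑ z, φ z * √(PZ z) = 0) (ε : ℝ) :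
    ∑ z, (√(PZ z) + ε * φ z) ^ 2 = 1 + ε ^ 2 * ∑ z, φ z ^ 2 := by
  have hexpand : ∀ z, (√(PZ z) + ε * φ z) ^ 2 = PZ z + 2 * ε * (φ z * √(PZ z)) + ε ^ 2 * φ z ^ 2 :=
    fun z => by linear_combination Real.sq_sqrt (hPZ_nonneg z)
  simp only [hexpand, sum_add_distrib, ← mul_sum, hPZ_sum, hφ, mul_zero, add_zero]

lemma div_sqrt_mul_sqrt_sq {p q : ℝ} (hp : 0 < p) (hq : 0 ≤ q) (ε t : ℝ) :
    ((p + ε * √p * t) * q / (√p * √q)) ^ 2 = q * (√p + ε * t) ^ 2 := by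
  rcases hq.eq_or_lt with rfl | hq
  · simp
  rw [div_pow, mul_pow, mul_pow, Real.sq_sqrt hp.le, Real.sq_sqrt hq.le,
    div_eq_iff (mul_pos hp hq).ne']
  linear_combination (q ^ 2 * (ε * t) ^ 2 - p * q ^ 2) * Real.sq_sqrt hp.le

lemma sum_mul_log_mul_div_mul {PX : X → ℝ} (hPX : ∀ x, PX x ≠ 0) (PZ : Z → ℝ) (f : X → Z → ℝ) :
    ∑ x, ∑ z, f x z * PX x * Real.log (f x z * PX x / (PZ z * PX x)) =
      ∑ x, PX x * ∑ z, f x z * Real.log (f x z / PZ z) := by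
  simp only [mul_sum, mul_div_mul_right _ _ (hPX _)]
  exact sum_congr rfl fun x _ => sum_congr rfl fun z _ => by ring

lemma sum_sum_div_sqrt_mul_sqrt_sq {PX : X → ℝ} (hPX_nonneg : ∀ x, 0 ≤ PX x)
    (hPX_sum : ∑ x, PX x = 1) {PZ : Z → ℝ} (hPZ_pos : ∀ z, 0 < PZ z) (hPZ_sum : ∑ z, PZ z = 1)
    {ψ : X → Z → ℝ} (hψ : ∀ x, ∑ z, ψ x z * √(PZ z) = 0) (ε : ℝ) :
    ∑ z, ∑ x, ((PZ z + ε * √(PZ z) * ψ x z) * PX x / (√(PZ z) * √(PX x))) ^ 2 =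
      1 + ε ^ 2 * ∑ x, PX x * ∑ z, ψ x z ^ 2 := by
  simp only [div_sqrt_mul_sqrt_sq (hPZ_pos _) (hPX_nonneg _)]
  rw [sum_comm]
  simp only [← mul_sum, sum_sq_sqrt_add_mul (fun z => (hPZ_pos z).le) hPZ_sum (hψ _), mul_add,
    mul_one, sum_add_distrib, hPX_sum]
  simp only [mul_sum]
  exact congrArg _ (sum_congr rfl fun x _ => sum_congr rfl fun z _ => by ring)

lemma sum_linear_add_quadratic {PZ : Z → ℝ} (hPZ_pos : ∀ z, 0 < PZ z) {φ : Z → ℝ}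
    (hφ : ∑ z, φ z * √(PZ z) = 0) (ε : ℝ) :
    ∑ z, (ε * (√(PZ z) * φ z) + ε ^ 2 * (√(PZ z) * φ z) ^ 2 / (2 * PZ z)) =
      ε ^ 2 / 2 * ∑ z, φ z ^ 2 := by
  have hterm : ∀ z, ε * (√(PZ z) * φ z) + ε ^ 2 * (√(PZ z) * φ z) ^ 2 / (2 * PZ z) =
      ε * (φ z * √(PZ z)) + ε ^ 2 / 2 * φ z ^ 2 := fun z => by
    rw [mul_pow, Real.sq_sqrt (hPZ_pos z).le]
    field_simp [(hPZ_pos z).ne']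
  simp only [hterm, sum_add_distrib, ← mul_sum, hφ, mul_zero, zero_add]

end

theorem mutual_information_local_approximation_general {X Z : Type*} [Fintype X] [Fintype Z]
    (PX : X → ℝ) (hPX_pos : ∀ x, 0 < PX x) (hPX_sum : ∑ x, PX x = 1)
    (PZ : Z → ℝ) (hPZ_pos : ∀ z, 0 < PZ z) (hPZ_sum : ∑ z, PZ z = 1)
    (ψ : X → Z → ℝ) (hψ : ∀ x, ∑ z, ψ x z * Real.sqrt (PZ z) = 0) :
    (fun ε : ℝ =>
        (∑ x, ∑ z, ((PZ z + ε * Real.sqrt (PZ z) * ψ x z) * PX x) *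
            Real.log (((PZ z + ε * Real.sqrt (PZ z) * ψ x z) * PX x) /
              (PZ z * PX x))) -
          (1 / 2) *
            ((∑ z, ∑ x, (((PZ z + ε * Real.sqrt (PZ z) * ψ x z) * PX x) /
                (Real.sqrt (PZ z) * Real.sqrt (PX x))) ^ 2) - 1))
      =o[nhds (0 : ℝ)] fun ε => ε ^ 2 := by
  have hremainder : (fun ε : ℝ => ∑ x, PX x * ∑ z,
      ((PZ z + ε * (√(PZ z) * ψ x z)) * Real.log ((PZ z + ε * (√(PZ z) * ψ x z)) / PZ z) -
        (ε * (√(PZ z) * ψ x z) + ε ^ 2 * (√(PZ z) * ψ x z) ^ 2 / (2 * PZ z))))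
      =O[𝓝 0] fun ε => ε ^ 3 :=
    IsBigO.fun_sum fun x _ => (IsBigO.fun_sum fun z _ =>
      Real.add_mul_log_div_sub_taylor_isBigO (hPZ_pos z).ne' _).const_mul_left (PX x)
  refine (hremainder.congr_left fun ε => ?_).trans_isLittleO
    (isLittleO_pow_pow (by norm_num : 2 < 3))
  rw [sum_mul_log_mul_div_mul (fun x => (hPX_pos x).ne'),
    sum_sum_div_sqrt_mul_sqrt_sq (fun x => (hPX_pos x).le) hPX_sum hPZ_pos hPZ_sum hψ]
  simp only [sum_sub_distrib, sum_linear_add_quadratic hPZ_pos (hψ _), mul_sub, mul_assoc,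
    mul_left_comm (PX _), ← mul_sum]
  ring

/-- **Local approximation of mutual information.** Under the local perturbation
`P^ε_{Z|X=x} = P_Z + ε √P_Z ψ_x` with `ψ_xᵀ √P_Z = 0` for every `x`, the mutual
information `I_ε(X;Z)` of the joint pmf `P^ε_{Z,X}(z,x) = P^ε_{Z|X=x}(z) P_X(x)`
satisfies `I_ε(X;Z) = (1/2)(‖B_ε‖_F² − 1) + o(ε²)` as `ε → 0`, where `B_ε` is the
DTM of `P^ε_{Z,X}`. -/
theorem mutual_information_local_approximation {X Z : Type*} [Fintype X] [Fintype Z]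
    [Nonempty X] [Nonempty Z]
    (PX : X → ℝ) (hPX_pos : ∀ x, 0 < PX x) (hPX_sum : ∑ x, PX x = 1)
    (PZ : Z → ℝ) (hPZ_pos : ∀ z, 0 < PZ z) (hPZ_sum : ∑ z, PZ z = 1)
    (ψ : X → Z → ℝ) (hψ : ∀ x, ∑ z, ψ x z * Real.sqrt (PZ z) = 0) :
    (fun ε : ℝ =>
        (∑ x, ∑ z, ((PZ z + ε * Real.sqrt (PZ z) * ψ x z) * PX x) *
            Real.log (((PZ z + ε * Real.sqrt (PZ z) * ψ x z) * PX x) /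
              (PZ z * PX x))) -
          (1 / 2) *
            ((∑ z, ∑ x, (((PZ z + ε * Real.sqrt (PZ z) * ψ x z) * PX x) /
                (Real.sqrt (PZ z) * Real.sqrt (PX x))) ^ 2) - 1))
      =o[nhds (0 : ℝ)] fun ε => ε ^ 2 :=
  mutual_information_local_approximation_general PX hPX_pos hPX_sum PZ hPZ_pos hPZ_sum ψ hψ
end

section
/- Let P be a joint pmf on finite sets Y × X with strictly positive marginals P_Y and P_X, and let B = [P_Y]^{-1/2} P [P_X]^{-1/2} be its divergence transition matrix. Consider the simple graph G on the vertex set Y ⊔ X (disjoint union) in which a vertex y ∈ Y is adjacent to a vertex x ∈ X if and only if P(y,x) > 0 (and there are no edges within Y or within X). Then the multiplicity of the eigenvalue 1 of the symmetric positive semidefinite matrix BᵀB (equivalently, the multiplicity of the singular value 1 of B) equals the number of connected components of G. -/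
open Matrix

/-- The divergence transition matrix of a joint pmf `J` on `α × β` with marginals
`Pa` and `Pb`: `B(J) = [Pa]^{-1/2} J [Pb]^{-1/2}`. -/
noncomputable def DTM {α β : Type*} [Fintype α] [Fintype β] [DecidableEq α] [DecidableEq β]
    (J : Matrix α β ℝ) (Pa : α → ℝ) (Pb : β → ℝ) : Matrix α β ℝ :=
  Matrix.diagonal (fun a => (Real.sqrt (Pa a))⁻¹) * J *
    Matrix.diagonal (fun b => (Real.sqrt (Pb b))⁻¹)

/-!
For `v : X → ℝ` put `f = v / √P_X` and `g = Bv / √P_Y`. Expanding the square gives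
`∑ P(y,x) (f x - g y)² = ‖v‖² - ‖Bv‖²`, and a fixed vector of `BᵀB` has `‖Bv‖ = ‖v‖`, so the
function `(g, f)` on `Y ⊔ X` is constant along every edge of `G`. Conversely, for any function
`F` constant along the edges, `√P_X · F` is fixed by `BᵀB`, because the rows and columns of `P`
sum to the marginals. Since each `y` has a neighbour, `F` is determined by its values on `X`, so
the eigenspace is isomorphic to the kernel of the Laplacian of `G`, whose dimension is the number
of connected components.
-/

open Module Module.End

section DTM

variable {α β : Type*} {J : Matrix α β ℝ}

variable (J) in
def constAlongSupport : Submodule ℝ (α ⊕ β → ℝ) where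
  carrier := {F | ∀ a b, 0 < J a b → F (Sum.inl a) = F (Sum.inr b)}
  add_mem' hF hG a b h := by simp [hF a b h, hG a b h]
  zero_mem' _ _ _ := rfl
  smul_mem' c F hF a b h := by simp [hF a b h]

theorem mem_constAlongSupport {F : α ⊕ β → ℝ} :
    F ∈ constAlongSupport J ↔ ∀ a b, 0 < J a b → F (Sum.inl a) = F (Sum.inr b) :=
  Iff.rfl

variable [Fintype α] [Fintype β] [DecidableEq α] [DecidableEq β] {Pa : α → ℝ} {Pb : β → ℝ}

theorem DTM_apply (a : α) (b : β) :
    DTM J Pa Pb a b = (√(Pa a))⁻¹ * J a b * (√(Pb b))⁻¹ := by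
  rw [DTM, mul_diagonal, diagonal_mul]

theorem DTM_transpose : (DTM J Pa Pb)ᵀ = DTM Jᵀ Pb Pa := by
  ext b a
  simp only [transpose_apply, DTM_apply]
  ring

theorem DTM_mulVec_sqrt_mul (hPa : ∀ a, Pa a = ∑ b, J a b) (hPb_pos : ∀ b, 0 < Pb b)
    {f : β → ℝ} {g : α → ℝ} (hgf : ∀ a b, J a b ≠ 0 → g a = f b) :
    DTM J Pa Pb *ᵥ (fun b => √(Pb b) * f b) = fun a => √(Pa a) * g a := by
  ext a
  have hterm : ∀ b, DTM J Pa Pb a b * (√(Pb b) * f b) = (√(Pa a))⁻¹ * (J a b * g a) := by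
    intro b
    rcases eq_or_ne (J a b) 0 with h | h
    · simp [DTM_apply, h]
    · rw [DTM_apply, hgf a b h]
      field_simp [(Real.sqrt_pos.2 (hPb_pos b)).ne']
  simp only [mulVec, dotProduct, hterm, ← Finset.mul_sum, ← Finset.sum_mul, ← hPa]
  rw [← mul_assoc, ← div_eq_inv_mul, Real.div_sqrt]

theorem sum_mul_sub_sq_eq_DTM (hPa : ∀ a, Pa a = ∑ b, J a b) (hPb : ∀ b, Pb b = ∑ a, J a b)
    (hPa_pos : ∀ a, 0 < Pa a) (hPb_pos : ∀ b, 0 < Pb b) (u : α → ℝ) (v : β → ℝ) :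
    ∑ a, ∑ b, J a b * (v b / √(Pb b) - u a / √(Pa a)) ^ 2 =
      v ⬝ᵥ v - 2 * (u ⬝ᵥ (DTM J Pa Pb *ᵥ v)) + u ⬝ᵥ u := by
  have hsq : ∀ {p : ℝ}, 0 < p → ∀ t, (t / √p) ^ 2 * p = t * t := by
    intro p hp t
    rw [div_pow, Real.sq_sqrt hp.le]
    field_simp
  have h1 : ∑ a, ∑ b, J a b * (v b / √(Pb b)) ^ 2 = v ⬝ᵥ v := by
    rw [Finset.sum_comm]
    simp_rw [mul_comm (J _ _), ← Finset.mul_sum, ← hPb, hsq (hPb_pos _)]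
    rfl
  have h2 : ∑ a, ∑ b, J a b * (v b / √(Pb b)) * (u a / √(Pa a)) =
      u ⬝ᵥ (DTM J Pa Pb *ᵥ v) := by
    simp only [dotProduct, mulVec, DTM_apply, Finset.mul_sum]
    refine Finset.sum_congr rfl fun a _ => Finset.sum_congr rfl fun b _ => ?_
    ring
  have h3 : ∑ a, ∑ b, J a b * (u a / √(Pa a)) ^ 2 = u ⬝ᵥ u := by
    simp_rw [← Finset.sum_mul, ← hPa, mul_comm (Pa _), hsq (hPa_pos _)]
    rfl
  rw [← h1, ← h2, ← h3, Finset.mul_sum, ← Finset.sum_sub_distrib, ← Finset.sum_add_distrib]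
  refine Finset.sum_congr rfl fun a _ => ?_
  rw [Finset.mul_sum, ← Finset.sum_sub_distrib, ← Finset.sum_add_distrib]
  exact Finset.sum_congr rfl fun b _ => by ring

theorem DTM_transpose_mul_self_dotProduct (v : β → ℝ) :
    v ⬝ᵥ (((DTM J Pa Pb)ᵀ * DTM J Pa Pb) *ᵥ v) = (DTM J Pa Pb *ᵥ v) ⬝ᵥ (DTM J Pa Pb *ᵥ v) := by
  rw [← mulVec_mulVec, mulVec_transpose, dotProduct_mulVec, dotProduct_comm]

theorem mem_constAlongSupport_of_mulVec_eq (hJ : ∀ a b, 0 ≤ J a b)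
    (hPa : ∀ a, Pa a = ∑ b, J a b) (hPb : ∀ b, Pb b = ∑ a, J a b)
    (hPa_pos : ∀ a, 0 < Pa a) (hPb_pos : ∀ b, 0 < Pb b) {v : β → ℝ}
    (hv : ((DTM J Pa Pb)ᵀ * DTM J Pa Pb) *ᵥ v = v) :
    Sum.elim (fun a => (DTM J Pa Pb *ᵥ v) a / √(Pa a)) (fun b => v b / √(Pb b)) ∈
      constAlongSupport J := by
  set u := DTM J Pa Pb *ᵥ v
  have hnn : ∀ a b, 0 ≤ J a b * (v b / √(Pb b) - u a / √(Pa a)) ^ 2 :=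
    fun a b => mul_nonneg (hJ a b) (sq_nonneg _)
  -- `BᵀBv = v` forces `‖u‖ = ‖v‖`, so the weighted sum of squares is `‖v‖² - 2‖u‖² + ‖u‖² = 0`.
  have hzero : ∑ a, ∑ b, J a b * (v b / √(Pb b) - u a / √(Pa a)) ^ 2 = 0 := by
    have hnorm : u ⬝ᵥ u = v ⬝ᵥ v := by rw [← DTM_transpose_mul_self_dotProduct, hv]
    rw [sum_mul_sub_sq_eq_DTM hPa hPb hPa_pos hPb_pos, hnorm]
    ring
  rw [Fintype.sum_eq_zero_iff_of_nonneg fun a => Finset.sum_nonneg fun b _ => hnn a b] at hzero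
  intro a b hab
  have hterm := congrFun ((Fintype.sum_eq_zero_iff_of_nonneg (hnn a)).1 (congrFun hzero a)) b
  simp only [Pi.zero_apply, mul_eq_zero, hab.ne', false_or, pow_eq_zero_iff two_ne_zero,
    sub_eq_zero] at hterm
  exact hterm.symm

theorem mem_eigenspace_one_DTM_iff (hJ : ∀ a b, 0 ≤ J a b)
    (hPa : ∀ a, Pa a = ∑ b, J a b) (hPb : ∀ b, Pb b = ∑ a, J a b)
    (hPa_pos : ∀ a, 0 < Pa a) (hPb_pos : ∀ b, 0 < Pb b) (v : β → ℝ) :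
    v ∈ eigenspace (toLin' ((DTM J Pa Pb)ᵀ * DTM J Pa Pb)) 1 ↔
      ∃ F ∈ constAlongSupport J, v = fun b => √(Pb b) * F (Sum.inr b) := by
  rw [mem_eigenspace_iff, toLin'_apply, one_smul]
  constructor
  · intro hv
    refine ⟨_, mem_constAlongSupport_of_mulVec_eq hJ hPa hPb hPa_pos hPb_pos hv, ?_⟩
    ext b
    simp [mul_div_cancel₀ _ (Real.sqrt_pos.2 (hPb_pos b)).ne']
  · rintro ⟨F, hF, rfl⟩
    have hF' : ∀ a b, J a b ≠ 0 → F (Sum.inl a) = F (Sum.inr b) :=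
      fun a b h => hF a b ((hJ a b).lt_of_ne' h)
    rw [← mulVec_mulVec, DTM_mulVec_sqrt_mul hPa hPb_pos hF', DTM_transpose,
      DTM_mulVec_sqrt_mul (J := Jᵀ) hPb hPa_pos fun b a h => (hF' a b h).symm]

theorem finrank_eigenspace_one_DTM (hJ : ∀ a b, 0 ≤ J a b)
    (hPa : ∀ a, Pa a = ∑ b, J a b) (hPb : ∀ b, Pb b = ∑ a, J a b)
    (hPa_pos : ∀ a, 0 < Pa a) (hPb_pos : ∀ b, 0 < Pb b) :
    finrank ℝ (eigenspace (toLin' ((DTM J Pa Pb)ᵀ * DTM J Pa Pb)) 1) =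
      finrank ℝ (constAlongSupport J) := by
  let Ψ : constAlongSupport J →ₗ[ℝ] β → ℝ := toLin' (diagonal fun b => √(Pb b)) ∘ₗ
    LinearMap.funLeft ℝ ℝ Sum.inr ∘ₗ (constAlongSupport J).subtype
  have hΨ : ∀ F, Ψ F = fun b => √(Pb b) * F.1 (Sum.inr b) := by
    intro F
    ext b
    simp [Ψ, mulVec_diagonal]
  have hrange : LinearMap.range Ψ = eigenspace (toLin' ((DTM J Pa Pb)ᵀ * DTM J Pa Pb)) 1 := by
    ext v
    rw [mem_eigenspace_one_DTM_iff hJ hPa hPb hPa_pos hPb_pos]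
    simp [hΨ, eq_comm]
  have hinj : Function.Injective Ψ := by
    rw [← LinearMap.ker_eq_bot, LinearMap.ker_eq_bot']
    intro F hF
    have hinr : ∀ b, F.1 (Sum.inr b) = 0 := fun b => by
      simpa [hΨ, (Real.sqrt_pos.2 (hPb_pos b)).ne'] using congrFun hF b
    ext (a | b)
    · obtain ⟨b, -, hab⟩ := Finset.exists_lt_of_sum_lt (s := Finset.univ) (f := 0)
        (g := J a) (by simpa [← hPa] using hPa_pos a)
      simp [F.2 a b hab, hinr b]
    · simp [hinr b]
  rw [← hrange, LinearMap.finrank_range_of_inj hinj]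

end DTM

theorem constAlongSupport_eq_ker_lapMatrix {Y X : Type*} [Fintype Y] [Fintype X]
    [DecidableEq Y] [DecidableEq X]
    {P : Matrix Y X ℝ} {G : SimpleGraph (Y ⊕ X)} [DecidableRel G.Adj]
    (hG : ∀ u v, G.Adj u v ↔
      ((∃ y x, u = Sum.inl y ∧ v = Sum.inr x ∧ 0 < P y x) ∨
        (∃ y x, u = Sum.inr x ∧ v = Sum.inl y ∧ 0 < P y x))) :
    constAlongSupport P = LinearMap.ker (toLin' (G.lapMatrix ℝ)) := by
  ext F
  rw [LinearMap.mem_ker, toLin'_apply, G.lapMatrix_mulVec_eq_zero_iff_forall_adj,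
    mem_constAlongSupport]
  constructor
  · intro hF u v huv
    rcases (hG u v).1 huv with ⟨y, x, rfl, rfl, h⟩ | ⟨y, x, rfl, rfl, h⟩
    · exact hF y x h
    · exact (hF y x h).symm
  · exact fun hF y x h => hF _ _ ((hG _ _).2 (Or.inl ⟨y, x, rfl, rfl, h⟩))

theorem DTM_singular_value_one_multiplicity_general {Y X : Type*} [Fintype Y] [Fintype X]
    [DecidableEq Y] [DecidableEq X]
    (P : Matrix Y X ℝ)
    (hP_nonneg : ∀ y x, 0 ≤ P y x)
    (PY : Y → ℝ) (hPY : ∀ y, PY y = ∑ x, P y x) (hPY_pos : ∀ y, 0 < PY y)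
    (PX : X → ℝ) (hPX : ∀ x, PX x = ∑ y, P y x) (hPX_pos : ∀ x, 0 < PX x)
    (B : Matrix Y X ℝ) (hB : B = DTM P PY PX)
    (G : SimpleGraph (Y ⊕ X))
    (hG : ∀ u v, G.Adj u v ↔
      ((∃ y x, u = Sum.inl y ∧ v = Sum.inr x ∧ 0 < P y x) ∨
        (∃ y x, u = Sum.inr x ∧ v = Sum.inl y ∧ 0 < P y x))) :
    Module.finrank ℝ (Module.End.eigenspace (Matrix.toLin' (Bᵀ * B)) 1) =
      Nat.card G.ConnectedComponent := by
  classical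
  rw [hB, finrank_eigenspace_one_DTM hP_nonneg hPY hPX hPY_pos hPX_pos,
    constAlongSupport_eq_ker_lapMatrix hG,
    ← G.card_connectedComponent_eq_finrank_ker_toLin'_lapMatrix, Nat.card_eq_fintype_card]

/-- The multiplicity of the singular value `1` of the DTM `B` of a joint pmf `P`
(i.e. the dimension of the eigenspace of `BᵀB` for the eigenvalue `1`) equals the
number of connected components of the bipartite graph on `Y ⊔ X` whose weighted
adjacency matrix is `P`. -/
theorem DTM_singular_value_one_multiplicity {Y X : Type*} [Fintype Y] [Fintype X]
    [Nonempty Y] [Nonempty X] [DecidableEq Y] [DecidableEq X]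
    (P : Matrix Y X ℝ)
    (hP_nonneg : ∀ y x, 0 ≤ P y x) (hP_sum : ∑ y, ∑ x, P y x = 1)
    (PY : Y → ℝ) (hPY : ∀ y, PY y = ∑ x, P y x) (hPY_pos : ∀ y, 0 < PY y)
    (PX : X → ℝ) (hPX : ∀ x, PX x = ∑ y, P y x) (hPX_pos : ∀ x, 0 < PX x)
    (B : Matrix Y X ℝ) (hB : B = DTM P PY PX)
    (G : SimpleGraph (Y ⊕ X))
    (hG : ∀ u v, G.Adj u v ↔
      ((∃ y x, u = Sum.inl y ∧ v = Sum.inr x ∧ 0 < P y x) ∨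
        (∃ y x, u = Sum.inr x ∧ v = Sum.inl y ∧ 0 < P y x))) :
    Module.finrank ℝ (Module.End.eigenspace (Matrix.toLin' (Bᵀ * B)) 1) =
      Nat.card G.ConnectedComponent :=
  DTM_singular_value_one_multiplicity_general P hP_nonneg PY hPY hPY_pos PX hPX hPX_pos B hB G hG
end

section
/- Let P_{Z,X} be a joint pmf on finite sets Z × X with strictly positive marginals P_Z and P_X, let B = B(P_{Z,X}) be its divergence transition matrix, and let r = min(|X|, |Z|). Then the nuclear norm of B satisfies the Ky Fan variational identity ‖B‖_* = max { tr(Fᵀ P_{Z,X} G) : F ∈ ℝ^{|Z| × r}, G ∈ ℝ^{|X| × r}, Fᵀ [P_Z] F = I_r, Gᵀ [P_X] G = I_r }. -/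
/-!
Substituting `U = [P_Z]^{1/2} F` and `V = [P_X]^{1/2} G` turns the weighted constraints into
`Uᵀ U = Vᵀ V = 1` and `tr (Fᵀ P G)` into `tr (Uᵀ B V)`, so the claim is Ky Fan's principle for `B`.
For the upper bound diagonalize `Bᵀ B = Q diag(d) Qᵀ` with eigenvector columns `qₓ`: then
`tr (Uᵀ B V) = ∑ₓ ⟪Uᵀ B qₓ, Vᵀ qₓ⟫`, and since `Uᵀ`, `Vᵀ` are contractions and `‖B qₓ‖² = dₓ`,
Cauchy–Schwarz bounds the `x`-th term by `√dₓ`. For equality take for `V` eigenvectors `qₓ` covering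
the `rank B ≤ r` nonzero eigenvalues, and for `U` the normalized columns of `B V`, which are
orthogonal, completed to an orthonormal family.
-/

open Matrix

open Finset Module InnerProductSpace

theorem exists_orthonormal_smul_eq_of_pairwise_inner_eq_zero {𝕜 E ι : Type*} [RCLike 𝕜]
    [NormedAddCommGroup E] [InnerProductSpace 𝕜 E] [FiniteDimensional 𝕜 E] [Fintype ι]
    {w : ι → E} (hw : Pairwise fun i j => inner 𝕜 (w i) (w j) = 0)
    (hι : Fintype.card ι ≤ finrank 𝕜 E) :
    ∃ u : ι → E, Orthonormal 𝕜 u ∧ ∀ i, w i = (‖w i‖ : 𝕜) • u i := by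
  obtain ⟨g⟩ : Nonempty (ι ↪ Fin (finrank 𝕜 E)) :=
    Function.Embedding.nonempty_of_card_le (by simpa using hι)
  -- Padded by zeros to `finrank 𝕜 E` vectors, `w` is completed by Gram–Schmidt to an
  -- orthonormal basis that only normalizes its nonzero members.
  set f := Function.extend g w 0
  have hfg (i : ι) : f (g i) = w i := g.injective.extend_apply _ _ _
  have hf_zero {a} (ha : ¬∃ i, g i = a) : f a = 0 := Function.extend_apply' _ _ _ ha
  have hf : Pairwise fun a b => inner 𝕜 (f a) (f b) = 0 := by
    intro a b hab
    rcases em (∃ i, g i = a) with ⟨i, rfl⟩ | ha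
    · rcases em (∃ j, g j = b) with ⟨j, rfl⟩ | hb
      · rw [hfg, hfg, hw (ne_of_apply_ne g hab)]
      · rw [hf_zero hb, inner_zero_right]
    · rw [hf_zero ha, inner_zero_left]
  set b := gramSchmidtOrthonormalBasis (Fintype.card_fin _).symm f
  refine ⟨b ∘ g, b.orthonormal.comp g g.injective, fun i => ?_⟩
  by_cases hi : w i = 0
  · simp [hi]
  · rw [Function.comp_apply, gramSchmidtOrthonormalBasis_apply_of_orthogonal _ hf
      (by rwa [hfg]), hfg, smul_smul, mul_inv_cancel₀ (by simpa using hi), one_smul]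

theorem Function.Embedding.exists_subset_range_of_card_le {α β : Type*} [Fintype α] [Fintype β]
    {s : Finset β} (hs : #s ≤ Fintype.card α) (hα : Fintype.card α ≤ Fintype.card β) :
    ∃ f : α ↪ β, ↑s ⊆ Set.range f := by
  obtain ⟨t, hst, -, ht⟩ := Finset.exists_subsuperset_card_eq (Finset.subset_univ s) hs
    (by rwa [Finset.card_univ])
  obtain ⟨f, hf⟩ := Function.Embedding.exists_of_card_eq_finset ht.symm
  refine ⟨f, fun x hx => ?_⟩
  simpa [← hf] using hst hx

namespace Matrix

section Spectral

variable {n : Type*} [Fintype n] [DecidableEq n]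

theorem IsHermitian.trace_cfc {𝕜 : Type*} [RCLike 𝕜] {A : Matrix n n 𝕜} (hA : A.IsHermitian)
    (f : ℝ → ℝ) : (hA.cfc f).trace = ∑ i, (f (hA.eigenvalues i) : 𝕜) := by
  rw [IsHermitian.cfc, Unitary.conjStarAlgAut_apply, trace_mul_cycle, Unitary.coe_star_mul_self,
    Matrix.one_mul, trace_diagonal]
  rfl

theorem IsHermitian.eigenvectorUnitary_mul_transpose {A : Matrix n n ℝ} (hA : A.IsHermitian) :
    (hA.eigenvectorUnitary : Matrix n n ℝ) * (hA.eigenvectorUnitary : Matrix n n ℝ)ᵀ = 1 := by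
  simpa [star_eq_conjTranspose] using Unitary.coe_mul_star_self hA.eigenvectorUnitary

theorem IsHermitian.transpose_eigenvectorUnitary_mul {A : Matrix n n ℝ} (hA : A.IsHermitian) :
    (hA.eigenvectorUnitary : Matrix n n ℝ)ᵀ * (hA.eigenvectorUnitary : Matrix n n ℝ) = 1 := by
  simpa [star_eq_conjTranspose] using Unitary.coe_star_mul_self hA.eigenvectorUnitary

theorem IsHermitian.transpose_eigenvectorUnitary_mul_mul {A : Matrix n n ℝ} (hA : A.IsHermitian) :
    (hA.eigenvectorUnitary : Matrix n n ℝ)ᵀ * A * hA.eigenvectorUnitary =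
      diagonal hA.eigenvalues := by
  simpa [Unitary.conjStarAlgAut_star_apply, star_eq_conjTranspose] using
    hA.conjStarAlgAut_star_eigenvectorUnitary

end Spectral

variable {m n r : Type*} [Fintype m]

theorem transpose_mul_self_apply_self_nonneg (M : Matrix m n ℝ) (x : n) : 0 ≤ (Mᵀ * M) x x :=
  Finset.sum_nonneg fun _ _ => mul_self_nonneg _

theorem real_inner_toLp_transpose_apply (M N : Matrix m r ℝ) (i j : r) :
    inner ℝ (WithLp.toLp 2 (Mᵀ i)) (WithLp.toLp 2 (Nᵀ j)) = (Mᵀ * N) i j := by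
  simp [PiLp.inner_apply, mul_apply, mul_comm]

theorem trace_mul_transpose_le [Fintype n] (C D : Matrix m n ℝ) :
    (C * Dᵀ).trace ≤ ∑ x, √((Cᵀ * C) x x) * √((Dᵀ * D) x x) := by
  simp only [trace, diag_apply, mul_apply, transpose_apply]
  rw [Finset.sum_comm]
  gcongr with x
  simpa [sq] using Real.sum_mul_le_sqrt_mul_sqrt univ (fun i => C i x) (fun i => D i x)

theorem transpose_mul_transpose_mul_self_apply_le [Fintype r] [DecidableEq r] {U : Matrix m r ℝ}
    (hU : Uᵀ * U = 1) (Y : Matrix m n ℝ) (x : n) :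
    ((Uᵀ * Y)ᵀ * (Uᵀ * Y)) x x ≤ (Yᵀ * Y) x x := by
  classical
  set P : Matrix m m ℝ := 1 - U * Uᵀ
  have hP : Pᵀ * P = P := by
    have hUU : U * Uᵀ * (U * Uᵀ) = U * Uᵀ := by
      rw [Matrix.mul_assoc, ← Matrix.mul_assoc Uᵀ, hU, Matrix.one_mul]
    simp only [P, transpose_sub, transpose_one, transpose_mul, transpose_transpose, sub_mul,
      mul_sub, Matrix.one_mul, Matrix.mul_one, hUU]
    abel
  have hPY : (P * Y)ᵀ * (P * Y) = Yᵀ * Y - (Uᵀ * Y)ᵀ * (Uᵀ * Y) := by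
    rw [transpose_mul, Matrix.mul_assoc, ← Matrix.mul_assoc Pᵀ, hP]
    simp only [P, Matrix.sub_mul, Matrix.mul_sub, transpose_mul, transpose_transpose,
      Matrix.one_mul, Matrix.mul_assoc]
  have := transpose_mul_self_apply_self_nonneg (P * Y) x
  rw [hPY, sub_apply] at this
  linarith

theorem exists_eq_mul_diagonal_sqrt [Fintype r] [DecidableEq r] (W : Matrix m r ℝ) {d : r → ℝ}
    (hW : Wᵀ * W = diagonal d) (hr : Fintype.card r ≤ Fintype.card m) :
    ∃ U : Matrix m r ℝ, Uᵀ * U = 1 ∧ W = U * diagonal fun i => √(d i) := by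
  set w : r → EuclideanSpace ℝ m := fun i => WithLp.toLp 2 (Wᵀ i)
  have hw (i j : r) : inner ℝ (w i) (w j) = diagonal d i j := by
    rw [← hW, real_inner_toLp_transpose_apply]
  obtain ⟨u, hu, hwu⟩ := exists_orthonormal_smul_eq_of_pairwise_inner_eq_zero (𝕜 := ℝ) (w := w)
    (fun i j hij => (hw i j).trans (diagonal_apply_ne _ hij)) (by simpa using hr)
  refine ⟨of fun a i => u i a, ?_, ?_⟩
  · ext i j
    rw [← real_inner_toLp_transpose_apply, one_apply]
    exact orthonormal_iff_ite.mp hu i j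
  · ext a i
    have hnorm : ‖w i‖ = √(d i) := by rw [norm_eq_sqrt_real_inner, hw, diagonal_apply_eq]
    have := congrArg (fun v : EuclideanSpace ℝ m => v a) (hwu i)
    rw [hnorm] at this
    simpa [mul_diagonal, mul_comm, w] using this

variable [Fintype n] [DecidableEq n]

theorem mul_eigenvectorUnitary_transpose_mul_self (B : Matrix m n ℝ) :
    (B * ((isHermitian_conjTranspose_mul_self B).eigenvectorUnitary : Matrix n n ℝ))ᵀ *
        (B * ((isHermitian_conjTranspose_mul_self B).eigenvectorUnitary : Matrix n n ℝ)) =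
      diagonal (isHermitian_conjTranspose_mul_self B).eigenvalues := by
  rw [transpose_mul, Matrix.mul_assoc, ← Matrix.mul_assoc Bᵀ, ← Matrix.mul_assoc,
    ← conjTranspose_eq_transpose_of_trivial B]
  exact (isHermitian_conjTranspose_mul_self B).transpose_eigenvectorUnitary_mul_mul

theorem card_eigenvalues_conjTranspose_mul_self_ne_zero (B : Matrix m n ℝ) :
    #{x | (isHermitian_conjTranspose_mul_self B).eigenvalues x ≠ 0} = B.rank := by
  rw [← rank_conjTranspose_mul_self,
    (isHermitian_conjTranspose_mul_self B).rank_eq_card_non_zero_eigs, Fintype.card_subtype]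

theorem trace_transpose_mul_mul_le [Fintype r] [DecidableEq r] (B : Matrix m n ℝ) {U : Matrix m r ℝ}
    {V : Matrix n r ℝ} (hU : Uᵀ * U = 1) (hV : Vᵀ * V = 1) :
    (Uᵀ * B * V).trace ≤ ∑ x, √((isHermitian_conjTranspose_mul_self B).eigenvalues x) := by
  set hA := isHermitian_conjTranspose_mul_self B
  set Q : Matrix n n ℝ := (hA.eigenvectorUnitary : Matrix n n ℝ)
  calc (Uᵀ * B * V).trace = (Uᵀ * (B * Q) * (Vᵀ * Q)ᵀ).trace := by
        rw [transpose_mul, transpose_transpose, show Uᵀ * (B * Q) * (Qᵀ * V) = Uᵀ * B * (Q * Qᵀ) * V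
          by simp only [Matrix.mul_assoc], hA.eigenvectorUnitary_mul_transpose, Matrix.mul_one]
    _ ≤ ∑ x, √(((Uᵀ * (B * Q))ᵀ * (Uᵀ * (B * Q))) x x) * √(((Vᵀ * Q)ᵀ * (Vᵀ * Q)) x x) :=
        trace_mul_transpose_le _ _
    _ ≤ ∑ x, √(((B * Q)ᵀ * (B * Q)) x x) * √((Qᵀ * Q) x x) := by
        gcongr with x <;> exact transpose_mul_transpose_mul_self_apply_le ‹_› _ x
    _ = ∑ x, √(hA.eigenvalues x) := by
        rw [mul_eigenvectorUnitary_transpose_mul_self, hA.transpose_eigenvectorUnitary_mul]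
        simp

theorem exists_trace_transpose_mul_mul_eq [Fintype r] [DecidableEq r] (B : Matrix m n ℝ)
    (hrm : Fintype.card r ≤ Fintype.card m) (hrn : Fintype.card r ≤ Fintype.card n)
    (hrank : B.rank ≤ Fintype.card r) :
    ∃ (U : Matrix m r ℝ) (V : Matrix n r ℝ), Uᵀ * U = 1 ∧ Vᵀ * V = 1 ∧
      (Uᵀ * B * V).trace = ∑ x, √((isHermitian_conjTranspose_mul_self B).eigenvalues x) := by
  set hA := isHermitian_conjTranspose_mul_self B
  set Q : Matrix n n ℝ := (hA.eigenvectorUnitary : Matrix n n ℝ)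
  obtain ⟨f, hf⟩ := Function.Embedding.exists_subset_range_of_card_le
    ((card_eigenvalues_conjTranspose_mul_self_ne_zero B).trans_le hrank) hrn
  set V := Q.submatrix id f
  have hV : Vᵀ * V = 1 := by
    rw [transpose_submatrix, ← submatrix_mul _ _ _ _ _ Function.bijective_id,
      hA.transpose_eigenvectorUnitary_mul, submatrix_one_embedding]
  have hBV : (B * V)ᵀ * (B * V) = diagonal (hA.eigenvalues ∘ f) := by
    rw [show B * V = (B * Q).submatrix id f by
        rw [submatrix_mul _ _ _ id _ Function.bijective_id, submatrix_id_id],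
      transpose_submatrix, ← submatrix_mul _ _ _ _ _ Function.bijective_id,
      mul_eigenvectorUnitary_transpose_mul_self, submatrix_diagonal_embedding]
  obtain ⟨U, hU, hBVU⟩ := exists_eq_mul_diagonal_sqrt (B * V) hBV hrm
  refine ⟨U, V, hU, hV, ?_⟩
  calc (Uᵀ * B * V).trace = ∑ i, √(hA.eigenvalues (f i)) := by
        rw [Matrix.mul_assoc, hBVU, ← Matrix.mul_assoc, hU, Matrix.one_mul, trace_diagonal]
        rfl
    _ = ∑ x, √(hA.eigenvalues x) := by
        rw [← Finset.sum_map univ f fun x => √(hA.eigenvalues x)]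
        refine Finset.sum_subset (Finset.subset_univ _) fun x _ hx => ?_
        suffices hA.eigenvalues x = 0 by rw [this, Real.sqrt_zero]
        by_contra hx0
        obtain ⟨i, rfl⟩ : x ∈ Set.range f := hf (by simpa using hx0)
        exact hx (mem_map_of_mem f (mem_univ i))

theorem isGreatest_trace_transpose_mul_mul [Fintype r] [DecidableEq r] (B : Matrix m n ℝ)
    (hrm : Fintype.card r ≤ Fintype.card m) (hrn : Fintype.card r ≤ Fintype.card n)
    (hrank : B.rank ≤ Fintype.card r) :
    IsGreatest {t | ∃ (U : Matrix m r ℝ) (V : Matrix n r ℝ), Uᵀ * U = 1 ∧ Vᵀ * V = 1 ∧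
        t = (Uᵀ * B * V).trace}
      (∑ x, √((isHermitian_conjTranspose_mul_self B).eigenvalues x)) := by
  refine ⟨?_, fun t ⟨U, V, hU, hV, ht⟩ => ht ▸ trace_transpose_mul_mul_le B hU hV⟩
  obtain ⟨U, V, hU, hV, h⟩ := exists_trace_transpose_mul_mul_eq B hrm hrn hrank
  exact ⟨U, V, hU, hV, h.symm⟩

end Matrix

section DTM

variable {α β r : Type*} [Fintype α] [Fintype β] [DecidableEq α] [DecidableEq β]

theorem transpose_mul_DTM_mul (P : Matrix α β ℝ) (a : α → ℝ) (b : β → ℝ) (U : Matrix α r ℝ)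
    (V : Matrix β r ℝ) :
    Uᵀ * DTM P a b * V =
      (diagonal (fun i => (√(a i))⁻¹) * U)ᵀ * P * (diagonal (fun j => (√(b j))⁻¹) * V) := by
  simp only [DTM, transpose_mul, diagonal_transpose, Matrix.mul_assoc]

theorem transpose_mul_diagonal_mul_eq_sqrt {a : α → ℝ} (ha : ∀ i, 0 ≤ a i) (F : Matrix α r ℝ) :
    Fᵀ * diagonal a * F = (diagonal (fun i => √(a i)) * F)ᵀ * (diagonal (fun i => √(a i)) * F) := by
  rw [transpose_mul, diagonal_transpose, Matrix.mul_assoc, Matrix.mul_assoc,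
    ← Matrix.mul_assoc (diagonal _) (diagonal _), diagonal_mul_diagonal]
  simp only [Real.mul_self_sqrt (ha _)]

theorem diagonal_inv_sqrt_mul_diagonal_sqrt_mul {a : α → ℝ} (ha : ∀ i, 0 < a i)
    (F : Matrix α r ℝ) :
    diagonal (fun i => (√(a i))⁻¹) * (diagonal (fun i => √(a i)) * F) = F := by
  rw [← Matrix.mul_assoc, diagonal_mul_diagonal]
  simp only [inv_mul_cancel₀ (Real.sqrt_pos.mpr (ha _)).ne', diagonal_one, Matrix.one_mul]

theorem diagonal_sqrt_mul_diagonal_inv_sqrt_mul {a : α → ℝ} (ha : ∀ i, 0 < a i)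
    (U : Matrix α r ℝ) :
    diagonal (fun i => √(a i)) * (diagonal (fun i => (√(a i))⁻¹) * U) = U := by
  rw [← Matrix.mul_assoc, diagonal_mul_diagonal]
  simp only [mul_inv_cancel₀ (Real.sqrt_pos.mpr (ha _)).ne', diagonal_one, Matrix.one_mul]

theorem setOf_trace_eq_setOf_trace_DTM [Fintype r] [DecidableEq r] (P : Matrix α β ℝ)
    {a : α → ℝ} {b : β → ℝ}
    (ha : ∀ i, 0 < a i) (hb : ∀ j, 0 < b j) :
    {t | ∃ (F : Matrix α r ℝ) (G : Matrix β r ℝ), Fᵀ * diagonal a * F = 1 ∧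
        Gᵀ * diagonal b * G = 1 ∧ t = (Fᵀ * P * G).trace} =
      {t | ∃ (U : Matrix α r ℝ) (V : Matrix β r ℝ), Uᵀ * U = 1 ∧ Vᵀ * V = 1 ∧
        t = (Uᵀ * DTM P a b * V).trace} := by
  have ha' i := (ha i).le
  have hb' j := (hb j).le
  ext t
  constructor
  · rintro ⟨F, G, hF, hG, rfl⟩
    refine ⟨_, _, (transpose_mul_diagonal_mul_eq_sqrt ha' F).symm.trans hF,
      (transpose_mul_diagonal_mul_eq_sqrt hb' G).symm.trans hG, ?_⟩
    rw [transpose_mul_DTM_mul, diagonal_inv_sqrt_mul_diagonal_sqrt_mul ha,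
      diagonal_inv_sqrt_mul_diagonal_sqrt_mul hb]
  · rintro ⟨U, V, hU, hV, rfl⟩
    refine ⟨_, _, ?_, ?_, by rw [transpose_mul_DTM_mul]⟩
    · rwa [transpose_mul_diagonal_mul_eq_sqrt ha', diagonal_sqrt_mul_diagonal_inv_sqrt_mul ha]
    · rwa [transpose_mul_diagonal_mul_eq_sqrt hb', diagonal_sqrt_mul_diagonal_inv_sqrt_mul hb]

end DTM

theorem ky_fan_nuclear_norm_DTM_general {Z X : Type*} [Fintype Z] [Fintype X]
    [DecidableEq Z] [DecidableEq X]
    (P : Matrix Z X ℝ)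
    (PZ : Z → ℝ) (hPZ_pos : ∀ z, 0 < PZ z)
    (PX : X → ℝ) (hPX_pos : ∀ x, 0 < PX x)
    (B : Matrix Z X ℝ) (hB : B = DTM P PZ PX) :
    IsGreatest
      {t : ℝ | ∃ (F : Matrix Z (Fin (min (Fintype.card X) (Fintype.card Z))) ℝ)
          (G : Matrix X (Fin (min (Fintype.card X) (Fintype.card Z))) ℝ),
          Fᵀ * Matrix.diagonal PZ * F = 1 ∧ Gᵀ * Matrix.diagonal PX * G = 1 ∧
            t = (Fᵀ * P * G).trace}
      ((((Matrix.posSemidef_conjTranspose_mul_self B).1.eigenvectorUnitary : Matrix X X ℝ) *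
        Matrix.diagonal ((RCLike.ofReal : ℝ → ℝ) ∘ Real.sqrt ∘ (Matrix.posSemidef_conjTranspose_mul_self B).1.eigenvalues) *
        (star ((Matrix.posSemidef_conjTranspose_mul_self B).1.eigenvectorUnitary : Matrix X X ℝ))).trace) := by
  have hrank : B.rank ≤ Fintype.card (Fin (min (Fintype.card X) (Fintype.card Z))) := by
    simpa using le_min (rank_le_card_width B) (rank_le_card_height B)
  rw [setOf_trace_eq_setOf_trace_DTM P hPZ_pos hPX_pos, ← hB]
  convert isGreatest_trace_transpose_mul_mul B (by simp) (by simp) hrank using 1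
  exact (isHermitian_conjTranspose_mul_self B).trace_cfc Real.sqrt

/-- **Ky Fan's extremum principle for the DTM.** The nuclear norm of the DTM `B` of a
joint pmf `P_{Z,X}` with strictly positive marginals is the maximum of
`tr(Fᵀ P_{Z,X} G)` over `F, G` with `Fᵀ [P_Z] F = I_r` and `Gᵀ [P_X] G = I_r`,
where `r = min(|X|, |Z|)`. -/
theorem ky_fan_nuclear_norm_DTM {Z X : Type*} [Fintype Z] [Fintype X]
    [Nonempty Z] [Nonempty X] [DecidableEq Z] [DecidableEq X]
    (P : Matrix Z X ℝ)
    (hP_nonneg : ∀ z x, 0 ≤ P z x) (hP_sum : ∑ z, ∑ x, P z x = 1)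
    (PZ : Z → ℝ) (hPZ : ∀ z, PZ z = ∑ x, P z x) (hPZ_pos : ∀ z, 0 < PZ z)
    (PX : X → ℝ) (hPX : ∀ x, PX x = ∑ z, P z x) (hPX_pos : ∀ x, 0 < PX x)
    (B : Matrix Z X ℝ) (hB : B = DTM P PZ PX) :
    IsGreatest
      {t : ℝ | ∃ (F : Matrix Z (Fin (min (Fintype.card X) (Fintype.card Z))) ℝ)
          (G : Matrix X (Fin (min (Fintype.card X) (Fintype.card Z))) ℝ),
          Fᵀ * Matrix.diagonal PZ * F = 1 ∧ Gᵀ * Matrix.diagonal PX * G = 1 ∧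
            t = (Fᵀ * P * G).trace}
      ((((Matrix.posSemidef_conjTranspose_mul_self B).1.eigenvectorUnitary : Matrix X X ℝ) *
        Matrix.diagonal ((RCLike.ofReal : ℝ → ℝ) ∘ Real.sqrt ∘ (Matrix.posSemidef_conjTranspose_mul_self B).1.eigenvalues) *
        (star ((Matrix.posSemidef_conjTranspose_mul_self B).1.eigenvectorUnitary : Matrix X X ℝ))).trace) :=
  ky_fan_nuclear_norm_DTM_general P PZ hPZ_pos PX hPX_pos B hB
end

section
/- Let P_{Z,X} be a joint pmf on finite sets Z × X with strictly positive marginals P_Z and P_X, and let B = B(P_{Z,X}) be its divergence transition matrix with ordered singular values σ₁(B) ≥ σ₂(B) ≥ …. Then σ₂(B) = max { fᵀ P_{Z,X} g : f ∈ ℝ^{|Z|}, g ∈ ℝ^{|X|}, fᵀ P_Z = 0, gᵀ P_X = 0, fᵀ [P_Z] f = 1, gᵀ [P_X] g = 1 }; that is, the second largest singular value of the DTM equals the maximal correlation max E[f(Z) g(X)] over functions f, g with E[f(Z)] = E[g(X)] = 0 and E[f(Z)²] = E[g(X)²] = 1. -/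
open Matrix

section Helpers

private lemma dot_expand' {X : Type*} [Fintype X] {N : ℕ} (W : Fin N → X → ℝ)
    (orth : ∀ i j, ∑ x, W i x * W j x = if i = j then (1:ℝ) else 0)
    (a b : Fin N → ℝ) :
    ∑ x, (∑ i, a i * W i x) * (∑ j, b j * W j x) = ∑ i, a i * b i := by
  have h1 : ∀ x, (∑ i, a i * W i x) * (∑ j, b j * W j x)
      = ∑ i, ∑ j, (a i * b j) * (W i x * W j x) := by
    intro x
    rw [Finset.sum_mul_sum]
    exact Finset.sum_congr rfl fun i _ => Finset.sum_congr rfl fun j _ => by ring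
  simp_rw [h1]
  rw [Finset.sum_comm]
  refine Finset.sum_congr rfl fun i _ => ?_
  rw [Finset.sum_comm]
  have h2 : ∀ j : Fin N, ∑ x, (a i * b j) * (W i x * W j x)
      = (a i * b j) * (if i = j then (1:ℝ) else 0) := by
    intro j; rw [← Finset.mul_sum, orth]
  simp_rw [h2]
  simp

private lemma dot_swap' {Z X : Type*} [Fintype Z] [Fintype X] (M : Matrix Z X ℝ)
    (φ : Z → ℝ) (ψ : X → ℝ) :
    ∑ z, φ z * (M *ᵥ ψ) z = ∑ x, (Mᵀ *ᵥ φ) x * ψ x := by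
  simp only [mulVec, dotProduct, transpose_apply, Finset.mul_sum, Finset.sum_mul]
  rw [Finset.sum_comm]
  exact Finset.sum_congr rfl fun x _ => Finset.sum_congr rfl fun z _ => by ring

private lemma quadform_eq' {Z X : Type*} [Fintype Z] [Fintype X] (B : Matrix Z X ℝ)
    (ψ : X → ℝ) :
    ∑ x, ψ x * ((Bᵀ * B) *ᵥ ψ) x = ∑ z, ((B *ᵥ ψ) z) ^ 2 := by
  have h : (Bᵀ * B) *ᵥ ψ = Bᵀ *ᵥ (B *ᵥ ψ) := by rw [Matrix.mulVec_mulVec]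
  rw [h]
  have h2 := dot_swap' Bᵀ ψ (B *ᵥ ψ)
  rw [h2, Matrix.transpose_transpose]
  simp [sq]

private lemma spectral_core' {X : Type*} [Fintype X] {N : ℕ} (hN2 : 2 ≤ N)
    (A : Matrix X X ℝ) (hsym : Aᵀ = A)
    (W : Fin N → X → ℝ)
    (orth : ∀ i j, ∑ x, W i x * W j x = if i = j then (1:ℝ) else 0)
    (expand : ∀ ψ : X → ℝ, ∀ x, ψ x = ∑ i, (∑ y, W i y * ψ y) * W i x)
    (μ : Fin N → ℝ) (hμa : Antitone μ) (heig : ∀ i, A *ᵥ W i = μ i • W i)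
    (hμle : ∀ i, μ i ≤ 1)
    (v : X → ℝ) (hv : A *ᵥ v = v) (hvn : ∑ x, v x ^ 2 = 1) :
    (∃ ψ : X → ℝ, (∑ x, ψ x ^ 2 = 1) ∧ (∑ x, v x * ψ x = 0) ∧
        A *ᵥ ψ = μ ⟨1, by omega⟩ • ψ) ∧
    (∀ ψ : X → ℝ, ∑ x, ψ x ^ 2 = 1 → ∑ x, v x * ψ x = 0 →
        ∑ x, ψ x * (A *ᵥ ψ) x ≤ μ ⟨1, by omega⟩) := by
  set i0 : Fin N := ⟨0, by omega⟩ with hi0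
  set i1 : Fin N := ⟨1, by omega⟩ with hi1
  set d : Fin N → ℝ := fun i => ∑ y, W i y * v y with hd_def
  have hmulW : ∀ (i : Fin N) (φ : X → ℝ), ∑ x, (A *ᵥ φ) x * W i x
      = μ i * ∑ y, W i y * φ y := by
    intro i φ
    have h1 : ∑ x, (A *ᵥ φ) x * W i x = ∑ y, φ y * (Aᵀ *ᵥ W i) y := by
      simp only [mulVec, dotProduct, transpose_apply, Finset.sum_mul, Finset.mul_sum]
      rw [Finset.sum_comm]
      exact Finset.sum_congr rfl fun x _ => Finset.sum_congr rfl fun z _ => by ring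
    rw [h1, hsym, heig i]
    simp only [Pi.smul_apply, smul_eq_mul, Finset.mul_sum]
    exact Finset.sum_congr rfl fun y _ => by ring
  have hd : ∀ i, μ i * d i = d i := by
    intro i
    have h1 := hmulW i v
    rw [hv] at h1
    have h2 : ∑ x, v x * W i x = d i := by
      simp only [hd_def]; exact Finset.sum_congr rfl fun x _ => by ring
    rw [h2] at h1
    rw [← h1, hd_def]
  have hsumd : ∑ i, d i ^ 2 = 1 := by
    have h1 : ∑ x, (∑ i, d i * W i x) * (∑ j, d j * W j x) = ∑ i, d i * d i :=
      dot_expand' W orth d d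
    have h2 : ∀ x, v x = ∑ i, d i * W i x := fun x => expand v x
    calc ∑ i, d i ^ 2 = ∑ i, d i * d i := by simp [sq]
    _ = ∑ x, (∑ i, d i * W i x) * (∑ j, d j * W j x) := h1.symm
    _ = ∑ x, v x ^ 2 := by
        refine Finset.sum_congr rfl fun x _ => ?_; rw [← h2 x, sq]
    _ = 1 := hvn
  have hμ0 : μ i0 = 1 := by
    have hex : ∃ i, d i ≠ 0 := by
      by_contra h
      push_neg at h
      simp [h] at hsumd
    obtain ⟨i, hi⟩ := hex
    have hμi : μ i = 1 := by
      have h0 : (μ i - 1) * d i = 0 := by nlinarith [hd i]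
      rcases mul_eq_zero.mp h0 with h | h
      · linarith
      · exact absurd h hi
    have hle : μ i ≤ μ i0 := hμa (by simp [hi0, Fin.le_def])
    linarith [hμle i0]
  have hi01 : i0 ≠ i1 := by simp [hi0, hi1, Fin.ext_iff]
  have hquad : ∀ ψ : X → ℝ, ∑ x, ψ x * (A *ᵥ ψ) x
      = ∑ i, μ i * (∑ y, W i y * ψ y) ^ 2 := by
    intro ψ
    set c : Fin N → ℝ := fun i => ∑ y, W i y * ψ y with hc
    have hAx : ∀ x, (A *ᵥ ψ) x = ∑ j, (μ j * c j) * W j x := by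
      intro x
      have h0 : (A *ᵥ ψ) x = ∑ y, A x y * ψ y := rfl
      rw [h0]
      have h1 : ∀ y, A x y * ψ y = ∑ i, c i * (A x y * W i y) := by
        intro y
        conv_lhs => rw [expand ψ y]
        rw [Finset.mul_sum]
        exact Finset.sum_congr rfl fun i _ => by ring
      simp_rw [h1]
      rw [Finset.sum_comm]
      refine Finset.sum_congr rfl fun j _ => ?_
      have hAW : ∑ y, A x y * W j y = μ j * W j x := by
        have h2 := congrFun (heig j) x
        simpa [mulVec, dotProduct] using h2
      calc ∑ y, c j * (A x y * W j y) = c j * ∑ y, A x y * W j y := by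
            rw [Finset.mul_sum]
        _ = (μ j * c j) * W j x := by rw [hAW]; ring
    calc ∑ x, ψ x * (A *ᵥ ψ) x
        = ∑ x, (∑ i, c i * W i x) * (∑ j, (μ j * c j) * W j x) := by
          refine Finset.sum_congr rfl fun x _ => ?_
          rw [← expand ψ x, ← hAx x]
      _ = ∑ i, c i * (μ i * c i) := dot_expand' W orth _ _
      _ = ∑ i, μ i * c i ^ 2 := Finset.sum_congr rfl fun i _ => by ring
  have hvdot : ∀ ψ : X → ℝ, ∑ x, v x * ψ x = ∑ i, d i * (∑ y, W i y * ψ y) := by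
    intro ψ
    calc ∑ x, v x * ψ x
        = ∑ x, (∑ i, d i * W i x) * (∑ j, (∑ y, W j y * ψ y) * W j x) := by
          refine Finset.sum_congr rfl fun x _ => ?_
          rw [← expand v x, ← expand ψ x]
      _ = ∑ i, d i * (∑ y, W i y * ψ y) := dot_expand' W orth _ _
  constructor
  · rcases lt_or_eq_of_le (hμle i1) with h | h
    · have hdz : d i1 = 0 := by
        have h2 : (μ i1 - 1) * d i1 = 0 := by nlinarith [hd i1]
        rcases mul_eq_zero.mp h2 with h3 | h3
        · linarith
        · exact h3
      refine ⟨W i1, ?_, ?_, ?_⟩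
      · have h11 := orth i1 i1
        simp at h11
        calc ∑ x, W i1 x ^ 2 = ∑ x, W i1 x * W i1 x :=
              Finset.sum_congr rfl fun x _ => sq (W i1 x)
          _ = 1 := h11
      · calc ∑ x, v x * W i1 x = ∑ y, W i1 y * v y :=
              Finset.sum_congr rfl fun x _ => by ring
          _ = 0 := hdz
      · exact heig i1
    · have hμ1 : μ i1 = 1 := h
      have key : ∀ p q : ℝ, ∑ x, (p * W i0 x + q * W i1 x) ^ 2 = p ^ 2 + q ^ 2 := by
        intro p q
        have h00 := orth i0 i0
        have h01 := orth i0 i1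
        have h11 := orth i1 i1
        rw [if_pos rfl] at h00 h11
        rw [if_neg hi01] at h01
        have hx : ∀ x, (p * W i0 x + q * W i1 x) ^ 2
            = p ^ 2 * (W i0 x * W i0 x) + (2 * p * q) * (W i0 x * W i1 x)
              + q ^ 2 * (W i1 x * W i1 x) := fun x => by ring
        simp_rw [hx]
        rw [Finset.sum_add_distrib, Finset.sum_add_distrib, ← Finset.mul_sum,
          ← Finset.mul_sum, ← Finset.mul_sum, h00, h01, h11]
        ring
      have keyv : ∀ p q : ℝ, ∑ x, v x * (p * W i0 x + q * W i1 x)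
          = p * d i0 + q * d i1 := by
        intro p q
        have hx : ∀ x, v x * (p * W i0 x + q * W i1 x)
            = p * (W i0 x * v x) + q * (W i1 x * v x) := fun x => by ring
        simp_rw [hx]
        rw [Finset.sum_add_distrib, ← Finset.mul_sum, ← Finset.mul_sum]
      have keyA : ∀ p q : ℝ, A *ᵥ (fun x => p * W i0 x + q * W i1 x)
          = fun x => p * W i0 x + q * W i1 x := by
        intro p q
        funext x
        have h0 : (A *ᵥ (fun x => p * W i0 x + q * W i1 x)) x
            = ∑ y, A x y * (p * W i0 y + q * W i1 y) := rfl
        have hAW0 : ∑ y, A x y * W i0 y = W i0 x := by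
          have h2 := congrFun (heig i0) x
          simp only [Pi.smul_apply, smul_eq_mul, hμ0, one_mul] at h2
          simpa [mulVec, dotProduct] using h2
        have hAW1 : ∑ y, A x y * W i1 y = W i1 x := by
          have h2 := congrFun (heig i1) x
          simp only [Pi.smul_apply, smul_eq_mul, hμ1, one_mul] at h2
          simpa [mulVec, dotProduct] using h2
        rw [h0]
        have hx : ∀ y, A x y * (p * W i0 y + q * W i1 y)
            = p * (A x y * W i0 y) + q * (A x y * W i1 y) := fun y => by ring
        simp_rw [hx]
        rw [Finset.sum_add_distrib, ← Finset.mul_sum, ← Finset.mul_sum, hAW0, hAW1]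
      by_cases hab : d i0 ^ 2 + d i1 ^ 2 = 0
      · have ha : d i0 = 0 := by nlinarith [sq_nonneg (d i0), sq_nonneg (d i1)]
        refine ⟨W i0, ?_, ?_, ?_⟩
        · have h00 := orth i0 i0
          rw [if_pos rfl] at h00
          calc ∑ x, W i0 x ^ 2 = ∑ x, W i0 x * W i0 x :=
                Finset.sum_congr rfl fun x _ => sq (W i0 x)
            _ = 1 := h00
        · calc ∑ x, v x * W i0 x = ∑ y, W i0 y * v y :=
                Finset.sum_congr rfl fun x _ => by ring
            _ = 0 := ha
        · rw [heig i0, hμ0, hμ1]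
      · set r : ℝ := Real.sqrt (d i0 ^ 2 + d i1 ^ 2) with hr_def
        have hab' : 0 < d i0 ^ 2 + d i1 ^ 2 := by
          rcases lt_or_eq_of_le (by positivity : (0:ℝ) ≤ d i0 ^ 2 + d i1 ^ 2) with h2 | h2
          · exact h2
          · exact absurd h2.symm hab
        have hr : 0 < r := Real.sqrt_pos.mpr hab'
        have hr2 : r ^ 2 = d i0 ^ 2 + d i1 ^ 2 := Real.sq_sqrt hab'.le
        refine ⟨fun x => (d i1 / r) * W i0 x + (-(d i0 / r)) * W i1 x, ?_, ?_, ?_⟩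
        · rw [key]
          field_simp
          linarith [hr2]
        · rw [keyv]; ring
        · rw [keyA, hμ1, one_smul]
  · intro ψ hn ho
    set c : Fin N → ℝ := fun i => ∑ y, W i y * ψ y with hc
    have hsc : ∑ i, c i ^ 2 = 1 := by
      have h1 : ∑ x, (∑ i, c i * W i x) * (∑ j, c j * W j x) = ∑ i, c i * c i :=
        dot_expand' W orth c c
      calc ∑ i, c i ^ 2 = ∑ i, c i * c i := Finset.sum_congr rfl fun i _ => sq (c i)
        _ = ∑ x, (∑ i, c i * W i x) * (∑ j, c j * W j x) := h1.symm
        _ = ∑ x, ψ x ^ 2 := by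
            refine Finset.sum_congr rfl fun x _ => ?_
            rw [← expand ψ x, sq]
        _ = 1 := hn
    have hdc : ∑ i, d i * c i = 0 := by rw [← hvdot ψ, ho]
    rw [hquad ψ]
    rcases lt_or_eq_of_le (hμle i1) with h | h
    · have hdz : ∀ i, i ≠ i0 → d i = 0 := by
        intro i hi
        have h1 : i1 ≤ i := by
          rw [Fin.le_def]
          have h5 : i.val ≠ 0 := fun hz => hi (Fin.ext hz)
          simp [hi1]
          omega
        have h2 : μ i < 1 := lt_of_le_of_lt (hμa h1) h
        have h3 : (μ i - 1) * d i = 0 := by nlinarith [hd i]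
        rcases mul_eq_zero.mp h3 with h4 | h4
        · linarith
        · exact h4
      have hd0 : d i0 ^ 2 = 1 := by
        rw [← hsumd]
        symm
        apply Finset.sum_eq_single
        · intro b _ hb
          rw [hdz b hb]; norm_num
        · intro hmem
          exact absurd (Finset.mem_univ i0) hmem
      have hc0 : c i0 = 0 := by
        have h1 : d i0 * c i0 = 0 := by
          rw [← hdc]
          symm
          apply Finset.sum_eq_single
          · intro b _ hb
            rw [hdz b hb]; ring
          · intro hmem
            exact absurd (Finset.mem_univ i0) hmem
        rcases mul_eq_zero.mp h1 with h2 | h2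
        · exfalso; rw [h2] at hd0; norm_num at hd0
        · exact h2
      calc ∑ i, μ i * c i ^ 2 ≤ ∑ i, μ i1 * c i ^ 2 := by
            refine Finset.sum_le_sum fun i _ => ?_
            by_cases hii : i = i0
            · rw [hii, hc0]; norm_num
            · have h1 : i1 ≤ i := by
                rw [Fin.le_def]
                have h5 : i.val ≠ 0 := fun hz => hii (Fin.ext hz)
                simp [hi1]
                omega
              exact mul_le_mul_of_nonneg_right (hμa h1) (sq_nonneg _)
        _ = μ i1 := by rw [← Finset.mul_sum, hsc, mul_one]
    · calc ∑ i, μ i * c i ^ 2 ≤ ∑ i, μ i1 * c i ^ 2 := by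
            refine Finset.sum_le_sum fun i _ => ?_
            exact mul_le_mul_of_nonneg_right (by rw [h]; exact hμle i) (sq_nonneg _)
        _ = μ i1 := by rw [← Finset.mul_sum, hsc, mul_one]

end Helpers

/-- **Maximal correlation as the second singular value of the DTM.** The second
largest singular value of the DTM `B` of a joint pmf `P_{Z,X}` (the square root of
the second largest eigenvalue of `BᵀB`, listed in decreasing order with multiplicity
via the antitone enumeration `i ↦ eigenvalues₀ (e i)`) is the maximum of
`fᵀ P_{Z,X} g = E[f(Z)g(X)]` over `f, g` with `E[f(Z)] = E[g(X)] = 0` and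
`E[f(Z)²] = E[g(X)²] = 1`. -/
theorem second_singular_value_eq_maximal_correlation {Z X : Type*}
    [Fintype Z] [Fintype X] [Nonempty Z] [Nonempty X] [DecidableEq Z] [DecidableEq X]
    (hZ2 : 2 ≤ Fintype.card Z) (hX2 : 2 ≤ Fintype.card X)
    (P : Matrix Z X ℝ)
    (hP_nonneg : ∀ z x, 0 ≤ P z x) (hP_sum : ∑ z, ∑ x, P z x = 1)
    (PZ : Z → ℝ) (hPZ : ∀ z, PZ z = ∑ x, P z x) (hPZ_pos : ∀ z, 0 < PZ z)
    (PX : X → ℝ) (hPX : ∀ x, PX x = ∑ z, P z x) (hPX_pos : ∀ x, 0 < PX x)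
    (B : Matrix Z X ℝ) (hB : B = DTM P PZ PX)
    (hH : (Bᵀ * B).IsHermitian)
    (e : Fin (Fintype.card X) ≃ Fin (Fintype.card X))
    (he : Antitone (fun i => hH.eigenvalues₀ (e i))) :
    IsGreatest
      {t : ℝ | ∃ (f : Z → ℝ) (g : X → ℝ),
          (∑ z, f z * PZ z = 0) ∧ (∑ x, g x * PX x = 0) ∧
          (∑ z, (f z) ^ 2 * PZ z = 1) ∧ (∑ x, (g x) ^ 2 * PX x = 1) ∧
          t = ∑ z, ∑ x, f z * P z x * g x}
      (Real.sqrt (hH.eigenvalues₀ (e ⟨1, by omega⟩))) := by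
  -- basic notation
  set u : Z → ℝ := fun z => Real.sqrt (PZ z) with hu_def
  set v : X → ℝ := fun x => Real.sqrt (PX x) with hv_def
  have hu_pos : ∀ z, 0 < u z := fun z => Real.sqrt_pos.mpr (hPZ_pos z)
  have hv_pos : ∀ x, 0 < v x := fun x => Real.sqrt_pos.mpr (hPX_pos x)
  have hu_ne : ∀ z, u z ≠ 0 := fun z => (hu_pos z).ne'
  have hv_ne : ∀ x, v x ≠ 0 := fun x => (hv_pos x).ne'
  have huu : ∀ z, u z * u z = PZ z := fun z => Real.mul_self_sqrt (hPZ_pos z).le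
  have hvv : ∀ x, v x * v x = PX x := fun x => Real.mul_self_sqrt (hPX_pos x).le
  have hBent : ∀ z x, B z x = (u z)⁻¹ * P z x * (v x)⁻¹ := by
    intro z x
    rw [hB]
    show (Matrix.diagonal (fun a => (Real.sqrt (PZ a))⁻¹) * P *
      Matrix.diagonal (fun b => (Real.sqrt (PX b))⁻¹)) z x = _
    rw [Matrix.mul_diagonal, Matrix.diagonal_mul]
  -- value identity
  have hval : ∀ (f : Z → ℝ) (g : X → ℝ),
      ∑ z, ∑ x, f z * P z x * g x
        = ∑ z, (f z * u z) * (B *ᵥ (fun x => g x * v x)) z := by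
    intro f g
    refine Finset.sum_congr rfl fun z _ => ?_
    rw [show (B *ᵥ fun x => g x * v x) z = ∑ x, B z x * (g x * v x) from rfl,
      Finset.mul_sum]
    refine Finset.sum_congr rfl fun x _ => ?_
    rw [hBent z x]
    field_simp [hu_ne z, hv_ne x]
  -- contraction property
  have hcontr : ∀ (φ : Z → ℝ) (ψ : X → ℝ),
      (∑ z, φ z * (B *ᵥ ψ) z) ^ 2 ≤ (∑ z, φ z ^ 2) * (∑ x, ψ x ^ 2) := by
    intro φ ψ
    have hL : ∑ z, φ z * (B *ᵥ ψ) z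
        = ∑ p : Z × X, (φ p.1 * Real.sqrt (P p.1 p.2) / u p.1)
          * (ψ p.2 * Real.sqrt (P p.1 p.2) / v p.2) := by
      rw [Fintype.sum_prod_type]
      refine Finset.sum_congr rfl fun z _ => ?_
      rw [show (B *ᵥ ψ) z = ∑ x, B z x * ψ x from rfl, Finset.mul_sum]
      refine Finset.sum_congr rfl fun x _ => ?_
      have hP2 : Real.sqrt (P z x) * Real.sqrt (P z x) = P z x :=
        Real.mul_self_sqrt (hP_nonneg z x)
      have h1 : (φ z * Real.sqrt (P z x) / u z) * (ψ x * Real.sqrt (P z x) / v x)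
          = φ z * ψ x * (Real.sqrt (P z x) * Real.sqrt (P z x)) * (u z)⁻¹ * (v x)⁻¹ := by
        field_simp
      rw [h1, hP2, hBent z x]
      ring
    rw [hL]
    have hCS := Finset.sum_mul_sq_le_sq_mul_sq Finset.univ
      (fun p : Z × X => φ p.1 * Real.sqrt (P p.1 p.2) / u p.1)
      (fun p : Z × X => ψ p.2 * Real.sqrt (P p.1 p.2) / v p.2)
    have hf2 : ∑ p : Z × X, (φ p.1 * Real.sqrt (P p.1 p.2) / u p.1) ^ 2
        = ∑ z, φ z ^ 2 := by
      rw [Fintype.sum_prod_type]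
      refine Finset.sum_congr rfl fun z _ => ?_
      have h1 : ∀ x, (φ z * Real.sqrt (P z x) / u z) ^ 2
          = φ z ^ 2 / PZ z * P z x := by
        intro x
        rw [div_pow, mul_pow, Real.sq_sqrt (hP_nonneg z x), hu_def,
          Real.sq_sqrt (hPZ_pos z).le]
        ring
      simp_rw [h1]
      rw [← Finset.mul_sum, ← hPZ z]
      field_simp [(hPZ_pos z).ne']
    have hg2 : ∑ p : Z × X, (ψ p.2 * Real.sqrt (P p.1 p.2) / v p.2) ^ 2
        = ∑ x, ψ x ^ 2 := by
      rw [Fintype.sum_prod_type_right]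
      refine Finset.sum_congr rfl fun x _ => ?_
      have h1 : ∀ z, (ψ x * Real.sqrt (P z x) / v x) ^ 2
          = ψ x ^ 2 / PX x * P z x := by
        intro z
        rw [div_pow, mul_pow, Real.sq_sqrt (hP_nonneg z x), hv_def,
          Real.sq_sqrt (hPX_pos x).le]
        ring
      simp_rw [h1]
      rw [← Finset.mul_sum, ← hPX x]
      field_simp [(hPX_pos x).ne']
    rw [hf2, hg2] at hCS
    exact hCS
  have hcontr2 : ∀ ψ : X → ℝ, ∑ z, ((B *ᵥ ψ) z) ^ 2 ≤ ∑ x, ψ x ^ 2 := by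
    intro ψ
    have h := hcontr (fun z => (B *ᵥ ψ) z) ψ
    have hS : ∑ z, (B *ᵥ ψ) z * (B *ᵥ ψ) z = ∑ z, ((B *ᵥ ψ) z) ^ 2 :=
      Finset.sum_congr rfl fun z _ => (sq ((B *ᵥ ψ) z)).symm
    rw [hS] at h
    have hSnn : 0 ≤ ∑ z, ((B *ᵥ ψ) z) ^ 2 :=
      Finset.sum_nonneg fun z _ => sq_nonneg _
    have hTnn : 0 ≤ ∑ x, ψ x ^ 2 := Finset.sum_nonneg fun x _ => sq_nonneg _
    nlinarith [h, hSnn, hTnn]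
  -- key vectors
  have hBv : B *ᵥ v = u := by
    funext z
    show ∑ x, B z x * v x = u z
    have h1 : ∀ x, B z x * v x = (u z)⁻¹ * P z x := by
      intro x
      rw [hBent z x]
      field_simp [hu_ne z, hv_ne x]
    simp_rw [h1]
    rw [← Finset.mul_sum, ← hPZ z]
    field_simp [hu_ne z]
    linarith [huu z]
  have hBTu : Bᵀ *ᵥ u = v := by
    funext x
    show ∑ z, Bᵀ x z * u z = v x
    have h1 : ∀ z, Bᵀ x z * u z = (v x)⁻¹ * P z x := by
      intro z
      rw [Matrix.transpose_apply, hBent z x]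
      field_simp [hu_ne z, hv_ne x]
    simp_rw [h1]
    rw [← Finset.mul_sum, ← hPX x]
    field_simp [hv_ne x]
    linarith [hvv x]
  have hAv : (Bᵀ * B) *ᵥ v = v := by
    rw [← Matrix.mulVec_mulVec, hBv, hBTu]
  have hvn : ∑ x, v x ^ 2 = 1 := by
    have h1 : ∀ x, v x ^ 2 = PX x := fun x => by rw [sq, hvv x]
    simp_rw [h1]
    have h2 : ∑ x, PX x = ∑ x, ∑ z, P z x := Finset.sum_congr rfl fun x _ => hPX x
    rw [h2, Finset.sum_comm, hP_sum]
  -- symmetry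
  have hsym : (Bᵀ * B)ᵀ = Bᵀ * B := by
    rw [← Matrix.conjTranspose_eq_transpose_of_trivial]
    exact hH
  -- eigenvector basis
  set κ : Fin (Fintype.card X) ≃ X := Fintype.equivOfCardEq (Fintype.card_fin _) with hκ
  set W : Fin (Fintype.card X) → X → ℝ :=
    fun i x => hH.eigenvectorBasis (κ (e i)) x with hW
  have heig : ∀ i, (Bᵀ * B) *ᵥ W i = hH.eigenvalues₀ (e i) • W i := by
    intro i
    have h1 := hH.mulVec_eigenvectorBasis (κ (e i))
    have h2 : hH.eigenvalues (κ (e i)) = hH.eigenvalues₀ (e i) := by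
      simp [Matrix.IsHermitian.eigenvalues, hκ]
    rw [h2] at h1
    exact h1
  have orth : ∀ i j, ∑ x, W i x * W j x = if i = j then (1:ℝ) else 0 := by
    intro i j
    have h1 := (orthonormal_iff_ite.mp hH.eigenvectorBasis.orthonormal)
      (κ (e i)) (κ (e j))
    simp only [PiLp.inner_apply, RCLike.inner_apply, conj_trivial] at h1
    rw [show (∑ x, W i x * W j x) = ∑ x, W j x * W i x from
      Finset.sum_congr rfl fun x _ => mul_comm _ _]
    simp only [hW]
    rw [h1]
    by_cases hij : i = j
    · simp [hij]
    · rw [if_neg hij, if_neg]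
      simp only [EmbeddingLike.apply_eq_iff_eq]
      exact hij
  have expand : ∀ ψ : X → ℝ, ∀ x, ψ x = ∑ i, (∑ y, W i y * ψ y) * W i x := by
    intro ψ x
    have h1 := hH.eigenvectorBasis.sum_repr' (WithLp.toLp 2 ψ)
    have h2 := congrFun (congrArg (fun f : EuclideanSpace ℝ X => (f : X → ℝ)) h1) x
    simp only [PiLp.inner_apply, RCLike.inner_apply, conj_trivial, WithLp.ofLp_sum,
      PiLp.toLp_apply] at h2
    rw [Finset.sum_apply] at h2
    simp only [PiLp.smul_apply, smul_eq_mul] at h2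
    simp only [mul_comm (ψ _)] at h2
    rw [← h2]
    exact (Fintype.sum_equiv (e.trans κ)
      (fun i => (∑ y, W i y * ψ y) * W i x)
      (fun j => (∑ y, hH.eigenvectorBasis j y * ψ y) * hH.eigenvectorBasis j x)
      (fun i => rfl)).symm
  -- eigenvalues are at most 1
  have hμle : ∀ i, hH.eigenvalues₀ (e i) ≤ 1 := by
    intro i
    have h1 : ∑ x, W i x * ((Bᵀ * B) *ᵥ W i) x
        = hH.eigenvalues₀ (e i) * ∑ x, W i x * W i x := by
      rw [heig i, Finset.mul_sum]
      exact Finset.sum_congr rfl fun x _ => by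
        simp only [Pi.smul_apply, smul_eq_mul]; ring
    rw [orth i i, if_pos rfl, mul_one] at h1
    have h2 := quadform_eq' B (W i)
    have h3 := hcontr2 (W i)
    have h4 : ∑ x, W i x ^ 2 = 1 := by
      have := orth i i
      rw [if_pos rfl] at this
      rw [← this]
      exact Finset.sum_congr rfl fun x _ => sq (W i x)
    rw [h4] at h3
    rw [h2] at h1
    linarith
  -- apply the spectral core
  obtain ⟨⟨ψ, hψn, hψo, hψe⟩, hub⟩ := spectral_core' hX2 (Bᵀ * B) hsym W orth expand
    (fun i => hH.eigenvalues₀ (e i)) he heig hμle v hAv hvn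
  set μ1 : ℝ := hH.eigenvalues₀ (e ⟨1, by omega⟩) with hμ1_def
  have hμ1eq : ∑ z, ((B *ᵥ ψ) z) ^ 2 = μ1 := by
    have h1 := quadform_eq' B ψ
    rw [hψe] at h1
    rw [← h1]
    have h2 : ∑ x, ψ x * (μ1 • ψ) x = μ1 * ∑ x, ψ x ^ 2 := by
      rw [Finset.mul_sum]
      exact Finset.sum_congr rfl fun x _ => by
        simp only [Pi.smul_apply, smul_eq_mul]; ring
    rw [h2, hψn, mul_one]
  have hμ1nn : 0 ≤ μ1 := by
    rw [← hμ1eq]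
    exact Finset.sum_nonneg fun z _ => sq_nonneg _
  -- reusable conversions
  have hfid : ∀ φ : Z → ℝ, ∑ z, (φ z / u z) * PZ z = ∑ z, φ z * u z := by
    refine fun φ => Finset.sum_congr rfl fun z _ => ?_
    rw [← huu z]
    calc φ z / u z * (u z * u z) = φ z * (u z / u z) * u z := by ring
      _ = φ z * u z := by rw [div_self (hu_ne z), mul_one]
  have hfsq : ∀ φ : Z → ℝ, ∑ z, (φ z / u z) ^ 2 * PZ z = ∑ z, φ z ^ 2 := by
    refine fun φ => Finset.sum_congr rfl fun z _ => ?_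
    rw [← huu z]
    calc (φ z / u z) ^ 2 * (u z * u z) = φ z ^ 2 * (u z / u z) ^ 2 := by ring
      _ = φ z ^ 2 := by rw [div_self (hu_ne z), one_pow, mul_one]
  have hgid : ∀ ψ' : X → ℝ, ∑ x, (ψ' x / v x) * PX x = ∑ x, ψ' x * v x := by
    refine fun ψ' => Finset.sum_congr rfl fun x _ => ?_
    rw [← hvv x]
    calc ψ' x / v x * (v x * v x) = ψ' x * (v x / v x) * v x := by ring
      _ = ψ' x * v x := by rw [div_self (hv_ne x), mul_one]
  have hgsq : ∀ ψ' : X → ℝ, ∑ x, (ψ' x / v x) ^ 2 * PX x = ∑ x, ψ' x ^ 2 := by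
    refine fun ψ' => Finset.sum_congr rfl fun x _ => ?_
    rw [← hvv x]
    calc (ψ' x / v x) ^ 2 * (v x * v x) = ψ' x ^ 2 * (v x / v x) ^ 2 := by ring
      _ = ψ' x ^ 2 := by rw [div_self (hv_ne x), one_pow, mul_one]
  have hgfun : (fun x => ψ x / v x * v x) = ψ := by
    funext x
    exact div_mul_cancel₀ (ψ x) (hv_ne x)
  constructor
  · -- membership: construct the maximizer
    show ∃ (f : Z → ℝ) (g : X → ℝ), _
    by_cases hzero : μ1 = 0
    · -- second singular value zero
      obtain ⟨z0, z1, hz01⟩ := Fintype.exists_pair_of_one_lt_card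
        (show 1 < Fintype.card Z by omega)
      have hsumpos : 0 < u z0 ^ 2 + u z1 ^ 2 :=
        add_pos_of_pos_of_nonneg (pow_pos (hu_pos z0) 2) (sq_nonneg _)
      set s : ℝ := Real.sqrt (u z0 ^ 2 + u z1 ^ 2) with hs_def
      have hspos : 0 < s := Real.sqrt_pos.mpr hsumpos
      have hs2 : s ^ 2 = u z0 ^ 2 + u z1 ^ 2 := Real.sq_sqrt hsumpos.le
      set φ : Z → ℝ := fun z => if z = z0 then u z1 / s
        else if z = z1 then -(u z0 / s) else 0 with hφ_def
      have htwo : ∀ F : Z → ℝ, (∀ z, z ≠ z0 → z ≠ z1 → F z = 0) →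
          ∑ z, F z = F z0 + F z1 := by
        intro F hF
        rw [← Finset.sum_subset (Finset.subset_univ {z0, z1})
          (fun z _ hz => by
            simp only [Finset.mem_insert, Finset.mem_singleton, not_or] at hz
            exact hF z hz.1 hz.2)]
        exact Finset.sum_pair hz01
      have hφ0 : φ z0 = u z1 / s := by rw [hφ_def]; simp
      have hφ1 : φ z1 = -(u z0 / s) := by
        rw [hφ_def]
        simp [hz01.symm]
      have hφu : ∑ z, φ z * u z = 0 := by
        rw [htwo _ (fun z h0 h1 => by rw [hφ_def]; simp [h0, h1]), hφ0, hφ1]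
        ring
      have hφsq : ∑ z, φ z ^ 2 = 1 := by
        rw [htwo _ (fun z h0 h1 => by rw [hφ_def]; simp [h0, h1]), hφ0, hφ1]
        have : (u z1 / s) ^ 2 + (-(u z0 / s)) ^ 2 = (u z0 ^ 2 + u z1 ^ 2) / s ^ 2 := by
          ring
        rw [this, hs2]
        exact div_self hsumpos.ne'
      have hBψ0 : ∀ z, (B *ᵥ ψ) z = 0 := by
        intro z
        have h0 : ∑ z, ((B *ᵥ ψ) z) ^ 2 = 0 := by rw [hμ1eq, hzero]
        have h1 := (Finset.sum_eq_zero_iff_of_nonneg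
          (fun i _ => sq_nonneg ((B *ᵥ ψ) i))).mp h0 z (Finset.mem_univ z)
        exact sq_eq_zero_iff.mp h1
      refine ⟨fun z => φ z / u z, fun x => ψ x / v x, ?_, ?_, ?_, ?_, ?_⟩
      · rw [hfid, hφu]
      · rw [hgid, ← hψo]
        exact Finset.sum_congr rfl fun x _ => by ring
      · rw [hfsq, hφsq]
      · rw [hgsq, hψn]
      · rw [hval, hgfun]
        have h1 : ∑ z, (φ z / u z * u z) * (B *ᵥ ψ) z = 0 := by
          refine Finset.sum_eq_zero fun z _ => ?_
          rw [hBψ0 z, mul_zero]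
        rw [h1, hzero, Real.sqrt_zero]
    · -- second singular value positive
      have hpos : 0 < μ1 := lt_of_le_of_ne hμ1nn (Ne.symm hzero)
      set s : ℝ := Real.sqrt μ1 with hs_def
      have hspos : 0 < s := Real.sqrt_pos.mpr hpos
      have hs2 : s * s = μ1 := Real.mul_self_sqrt hμ1nn
      set φ : Z → ℝ := fun z => s⁻¹ * (B *ᵥ ψ) z with hφ_def
      have hφu : ∑ z, φ z * u z = 0 := by
        have h1 : ∑ z, u z * (B *ᵥ ψ) z = 0 := by
          rw [dot_swap' B u ψ, hBTu]
          exact hψo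
        have h2 : ∑ z, φ z * u z = s⁻¹ * ∑ z, u z * (B *ᵥ ψ) z := by
          rw [Finset.mul_sum]
          exact Finset.sum_congr rfl fun z _ => by rw [hφ_def]; ring
        rw [h2, h1, mul_zero]
      have hφsq : ∑ z, φ z ^ 2 = 1 := by
        have h1 : ∑ z, φ z ^ 2 = s⁻¹ ^ 2 * ∑ z, ((B *ᵥ ψ) z) ^ 2 := by
          rw [Finset.mul_sum]
          exact Finset.sum_congr rfl fun z _ => by rw [hφ_def]; ring
        rw [h1, hμ1eq, ← hs2]
        field_simp
      refine ⟨fun z => φ z / u z, fun x => ψ x / v x, ?_, ?_, ?_, ?_, ?_⟩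
      · rw [hfid, hφu]
      · rw [hgid, ← hψo]
        exact Finset.sum_congr rfl fun x _ => by ring
      · rw [hfsq, hφsq]
      · rw [hgsq, hψn]
      · rw [hval, hgfun]
        have h1 : ∑ z, (φ z / u z * u z) * (B *ᵥ ψ) z
            = s⁻¹ * ∑ z, ((B *ᵥ ψ) z) ^ 2 := by
          rw [Finset.mul_sum]
          refine Finset.sum_congr rfl fun z _ => ?_
          rw [div_mul_cancel₀ (φ z) (hu_ne z), hφ_def]
          ring
        rw [h1, hμ1eq, ← hs2]
        field_simp
  · -- upper bound
    rintro t ⟨f, g, hf0, hg0, hf1, hg1, ht⟩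
    set φ : Z → ℝ := fun z => f z * u z with hφ_def
    set ψ' : X → ℝ := fun x => g x * v x with hψ'_def
    have hφn : ∑ z, φ z ^ 2 = 1 := by
      rw [← hf1]
      refine Finset.sum_congr rfl fun z _ => ?_
      rw [hφ_def, ← huu z]
      ring
    have hψ'n : ∑ x, ψ' x ^ 2 = 1 := by
      rw [← hg1]
      refine Finset.sum_congr rfl fun x _ => ?_
      rw [hψ'_def, ← hvv x]
      ring
    have hψ'o : ∑ x, v x * ψ' x = 0 := by
      rw [← hg0]
      refine Finset.sum_congr rfl fun x _ => ?_
      rw [hψ'_def, ← hvv x]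
      ring
    have hb := hub ψ' hψ'n hψ'o
    have hq : ∑ z, ((B *ᵥ ψ') z) ^ 2 ≤ μ1 := by
      rw [← quadform_eq' B ψ']
      exact hb
    have ht' : t = ∑ z, φ z * (B *ᵥ ψ') z := by rw [ht, hval]
    have hCS := Finset.sum_mul_sq_le_sq_mul_sq Finset.univ φ (fun z => (B *ᵥ ψ') z)
    have ht2 : t ^ 2 ≤ μ1 := by
      rw [ht']
      calc (∑ z, φ z * (B *ᵥ ψ') z) ^ 2
          ≤ (∑ z, φ z ^ 2) * ∑ z, ((B *ᵥ ψ') z) ^ 2 := hCS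
        _ = ∑ z, ((B *ᵥ ψ') z) ^ 2 := by rw [hφn, one_mul]
        _ ≤ μ1 := hq
    calc t ≤ |t| := le_abs_self t
      _ = Real.sqrt (t ^ 2) := (Real.sqrt_sq_eq_abs t).symm
      _ ≤ Real.sqrt μ1 := Real.sqrt_le_sqrt ht2
end
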